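/- arXiv:2205.04335 — 10 statements merged into one kernel-verified Lean document; each statement's English description precedes it below -/
import Mathlib

section
/- Let m ≥ 1, n ≥ 0 be integers and a_{−n}, …, a_{m−1} ∈ ℂ such that the Laurent polynomial f(z) = ∑_{k=−n}^{m−1} a_k z^k has no zeros on the unit circle {z ∈ ℂ : |z| = 1}. Define β : ℤ → ℂ by β(d) = (1/(2πi)) ∮_{|z|=1} z^{−d−1}/f(z) dz (counterclockwise circle integral). Then for every integer d ∈ ℤ, ∑_{t=−n}^{m−1} a_t · β(d − t) = [d = 0] (1 if d = 0 and 0 otherwise). In other words, the biinfinite Toeplitz matrix with symbol 1/f is a right inverse of the biinfinite banded Toeplitz matrix with symbol f. -/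
open Finset Metric Complex Real

/-!
By linearity of the circle integral, the sum on the left is
`(2πi)⁻¹ ∮ z ^ (-d-1) f(z) / f(z) dz = (2πi)⁻¹ ∮ z ^ (-d-1) dz`, which is `1` for `d = 0` and
`0` otherwise.
-/

theorem circleIntegral_sub_center_zpow_neg_sub_one (c : ℂ) {R : ℝ} (hR : R ≠ 0) (d : ℤ) :
    (∮ z in C(c, R), (z - c) ^ (-d - 1)) = if d = 0 then 2 * π * I else 0 := by
  split_ifs with hd
  · simp [hd, hR]
  · exact circleIntegral.integral_sub_zpow_of_ne (by omega) c c R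

theorem sum_mul_circleIntegral_zpow_div_of_eqOn_laurent {S : Finset ℤ} {a : ℤ → ℂ}
    {f : ℂ → ℂ} {R : ℝ} (hR : 0 < R) (hf : ∀ z ∈ sphere (0 : ℂ) R, f z = ∑ k ∈ S, a k * z ^ k)
    (hf₀ : ∀ z ∈ sphere (0 : ℂ) R, f z ≠ 0) (d : ℤ) :
    ∑ t ∈ S, a t * (∮ z in C(0, R), z ^ (-(d - t) - 1) / f z) = ∮ z in C(0, R), z ^ (-d - 1) := by
  have hz₀ : ∀ z ∈ sphere (0 : ℂ) R, z ≠ 0 := fun z hz =>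
    ne_zero_of_mem_sphere hR.ne' ⟨z, hz⟩
  have hzpow : ∀ k : ℤ, ContinuousOn (fun z : ℂ => z ^ k) (sphere 0 R) := fun k =>
    continuousOn_id.zpow₀ k fun z hz => Or.inl (hz₀ z hz)
  have hfc : ContinuousOn f (sphere 0 R) :=
    (continuousOn_finsetSum S fun k _ => continuousOn_const.mul (hzpow k)).congr hf
  have hint : ∀ t ∈ S, CircleIntegrable (fun z => a t * (z ^ (-(d - t) - 1) / f z)) 0 R :=
    fun t _ => (continuousOn_const.mul ((hzpow _).div hfc hf₀)).circleIntegrable hR.le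
  simp_rw [← circleIntegral.integral_const_mul]
  rw [← circleIntegral.integral_fun_sum hint]
  refine circleIntegral.integral_congr hR.le fun z hz => ?_
  have hsplit : ∀ t : ℤ, z ^ (-(d - t) - 1) = z ^ t * z ^ (-d - 1) := fun t => by
    rw [← zpow_add₀ (hz₀ z hz)]
    ring_nf
  simp only [hsplit]
  calc ∑ t ∈ S, a t * (z ^ t * z ^ (-d - 1) / f z)
      = (∑ t ∈ S, a t * z ^ t) * z ^ (-d - 1) / f z := by
        rw [Finset.sum_mul, Finset.sum_div]
        exact Finset.sum_congr rfl fun t _ => by ring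
    _ = z ^ (-d - 1) := by
        rw [← hf z hz, mul_div_assoc, mul_div_cancel₀ _ (hf₀ z hz)]

theorem stmt1_general (m n : ℕ) (a : ℤ → ℂ)
    (f : ℂ → ℂ)
    (hf : ∀ z : ℂ, f z = ∑ k ∈ Finset.Icc (-(n : ℤ)) ((m : ℤ) - 1), a k * z ^ k)
    (hroots : ∀ z : ℂ, ‖z‖ = 1 → f z ≠ 0)
    (β : ℤ → ℂ)
    (hβ : ∀ d : ℤ,
      β d = (2 * Real.pi * Complex.I : ℂ)⁻¹ * (∮ z in C(0, 1), z ^ (-d - 1) / f z)) :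
    ∀ d : ℤ,
      ∑ t ∈ Finset.Icc (-(n : ℤ)) ((m : ℤ) - 1), a t * β (d - t)
        = if d = 0 then 1 else 0 := by
  intro d
  have hf₀ : ∀ z ∈ sphere (0 : ℂ) 1, f z ≠ 0 := fun z hz =>
    hroots z (mem_sphere_zero_iff_norm.mp hz)
  simp_rw [hβ, mul_left_comm _ (2 * π * I : ℂ)⁻¹, ← Finset.mul_sum,
    sum_mul_circleIntegral_zpow_div_of_eqOn_laurent one_pos (fun z _ => hf z) hf₀ d]
  have hresidue := circleIntegral_sub_center_zpow_neg_sub_one 0 one_ne_zero d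
  simp only [sub_zero] at hresidue
  rw [hresidue]
  split_ifs
  · exact inv_mul_cancel₀ (by simp [pi_ne_zero])
  · exact mul_zero _

/-- The biinfinite Toeplitz matrix with symbol `1/f` is a right inverse of the biinfinite
banded Toeplitz matrix with symbol `f`: here `f` is the Laurent polynomial
`f(z) = ∑_{k=-n}^{m-1} a_k z^k` (without zeros on the unit circle) and
`β d = (1/(2πi)) ∮_{|z|=1} z^{-d-1}/f(z) dz`. -/
theorem stmt1 (m n : ℕ) (hm : 1 ≤ m) (a : ℤ → ℂ)
    (f : ℂ → ℂ)
    (hf : ∀ z : ℂ, f z = ∑ k ∈ Finset.Icc (-(n : ℤ)) ((m : ℤ) - 1), a k * z ^ k)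
    (hroots : ∀ z : ℂ, ‖z‖ = 1 → f z ≠ 0)
    (β : ℤ → ℂ)
    (hβ : ∀ d : ℤ,
      β d = (2 * Real.pi * Complex.I : ℂ)⁻¹ * (∮ z in C(0, 1), z ^ (-d - 1) / f z)) :
    ∀ d : ℤ,
      ∑ t ∈ Finset.Icc (-(n : ℤ)) ((m : ℤ) - 1), a t * β (d - t)
        = if d = 0 then 1 else 0 :=
  stmt1_general m n a f hf hroots β hβ
end

section
/- Let f : ℤ → ℂ be a function, and for q ∈ ℤ let f_q(i) = f(i + q). Assume the ℂ-linear span V = span{f_q : q ∈ ℤ} inside the space of functions ℤ → ℂ is finite-dimensional. Let N₁, N₂ ≥ 1 and let A ∈ ℂ^{(N₁N₂)×(N₁N₂)} be the circulant with entries A_{i,j} = f((i − j) mod N₁N₂). Define the reshaped matrix Â ∈ ℂ^{N₁²×N₂²} by Â_{i₁N₁+j₁, i₂N₂+j₂} = A_{i₁N₂+i₂, j₁N₂+j₂} for 0 ≤ i₁, j₁ ≤ N₁−1 and 0 ≤ i₂, j₂ ≤ N₂−1. Then rank(Â) ≤ 1 + dim V. -/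
/-- If the span of the integer shifts of `f : ℤ → ℂ` is finite-dimensional, then the
reshaped matrix `Â` of the circulant `A` with entries `A i j = f ((i - j) mod N₁N₂)`,
defined by `Â_{(i₁,j₁),(i₂,j₂)} = A_{i₁N₂+i₂, j₁N₂+j₂}`, has rank at most `1 + dim V`. -/
theorem stmt5 (f : ℤ → ℂ)
    (hV : FiniteDimensional ℂ
      ↥(Submodule.span ℂ (Set.range fun q : ℤ => fun i : ℤ => f (i + q))))
    (N₁ N₂ : ℕ) (hN₁ : 1 ≤ N₁) (hN₂ : 1 ≤ N₂)
    (A : Matrix (Fin (N₁ * N₂)) (Fin (N₁ * N₂)) ℂ)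
    (hA : ∀ i j : Fin (N₁ * N₂), A i j = f ((((i : ℕ) : ℤ) - ((j : ℕ) : ℤ)) % ((N₁ * N₂ : ℕ) : ℤ)))
    (Ahat : Matrix (Fin N₁ × Fin N₁) (Fin N₂ × Fin N₂) ℂ)
    (hAhat : ∀ (i₁ j₁ : Fin N₁) (i₂ j₂ : Fin N₂),
      Ahat (i₁, j₁) (i₂, j₂) = A (finProdFinEquiv (i₁, i₂)) (finProdFinEquiv (j₁, j₂))) :
    Matrix.rank Ahat
      ≤ 1 + Module.finrank ℂ
          ↥(Submodule.span ℂ (Set.range fun q : ℤ => fun i : ℤ => f (i + q))) := by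
  classical
  set V := Submodule.span ℂ (Set.range fun q : ℤ => fun i : ℤ => f (i + q)) with hVdef
  set M : ℤ := ((N₁ * N₂ : ℕ) : ℤ) with hMdef
  have hN₂' : (0:ℤ) < (N₂:ℤ) := by exact_mod_cast hN₂
  -- the evaluation linear map
  let Φ : (ℤ → ℂ) →ₗ[ℂ] ((Fin N₂ × Fin N₂) → ℂ) :=
    { toFun := fun h p => h (((p.1 : ℕ) : ℤ) - ((p.2 : ℕ) : ℤ)),
      map_add' := fun _ _ => rfl,
      map_smul' := fun _ _ => rfl }
  let r₀ : (Fin N₂ × Fin N₂) → ℂ := fun p => f ((((p.1 : ℕ) : ℤ) - ((p.2 : ℕ) : ℤ)) % M)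
  let W : Submodule ℂ ((Fin N₂ × Fin N₂) → ℂ) := Submodule.map Φ V ⊔ Submodule.span ℂ {r₀}
  have hshift : ∀ q : ℤ, (fun i : ℤ => f (i + q)) ∈ V := fun q =>
    Submodule.subset_span ⟨q, rfl⟩
  -- entry formula
  have hentry : ∀ (i₁ j₁ : Fin N₁) (i₂ j₂ : Fin N₂),
      Ahat (i₁, j₁) (i₂, j₂)
        = f (((((i₁:ℕ):ℤ) - ((j₁:ℕ):ℤ)) * N₂ + (((i₂:ℕ):ℤ) - ((j₂:ℕ):ℤ))) % M) := by
    intro i₁ j₁ i₂ j₂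
    rw [hAhat, hA]
    congr 1
    simp [finProdFinEquiv, hMdef]
    push_cast
    ring_nf
  -- every row lies in W
  have hrow : ∀ x : Fin N₁ × Fin N₁, Ahat x ∈ W := by
    rintro ⟨i₁, j₁⟩
    rcases lt_trichotomy (i₁ : ℕ) (j₁ : ℕ) with h | h | h
    · -- i₁ < j₁ : row = Φ (shift by (i₁-j₁)*N₂ + M)
      refine Submodule.mem_sup_left ⟨_, hshift ((((i₁:ℕ):ℤ) - ((j₁:ℕ):ℤ)) * N₂ + M), ?_⟩
      funext p
      obtain ⟨i₂, j₂⟩ := p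
      have e := hentry i₁ j₁ i₂ j₂
      have hi₁ : ((i₁:ℕ):ℤ) < ((j₁:ℕ):ℤ) := by exact_mod_cast h
      have hj₁ : ((j₁:ℕ):ℤ) < N₁ := by exact_mod_cast j₁.2
      have hi₂ : ((i₂:ℕ):ℤ) < N₂ := by exact_mod_cast i₂.2
      have hj₂ : ((j₂:ℕ):ℤ) < N₂ := by exact_mod_cast j₂.2
      have hi₂0 : (0:ℤ) ≤ ((i₂:ℕ):ℤ) := Int.ofNat_nonneg _
      have hj₂0 : (0:ℤ) ≤ ((j₂:ℕ):ℤ) := Int.ofNat_nonneg _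
      have hi₁0 : (0:ℤ) ≤ ((i₁:ℕ):ℤ) := Int.ofNat_nonneg _
      set a : ℤ := (((i₁:ℕ):ℤ) - ((j₁:ℕ):ℤ)) * N₂ + (((i₂:ℕ):ℤ) - ((j₂:ℕ):ℤ)) with ha
      have hMcast : M = (N₁:ℤ) * N₂ := by simp [hMdef]
      have h1 : (0:ℤ) ≤ a + M := by rw [hMcast]; nlinarith
      have h2 : a + M < M := by rw [hMcast]; nlinarith
      have hmod : a % M = a + M := by
        rw [← Int.add_mul_emod_self_left (b := M) (c := 1)]
        rw [mul_one, Int.emod_eq_of_lt h1 (by rw [hMcast]; nlinarith)]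
      show f _ = _
      rw [e, hmod]
      congr 1
      ring
    · -- i₁ = j₁ : row = r₀
      refine Submodule.mem_sup_right (Submodule.subset_span ?_)
      have : Ahat (i₁, j₁) = r₀ := by
        funext p
        obtain ⟨i₂, j₂⟩ := p
        have e := hentry i₁ j₁ i₂ j₂
        show Ahat (i₁, j₁) (i₂, j₂) = f _
        rw [e]
        congr 1
        have : ((i₁:ℕ):ℤ) = ((j₁:ℕ):ℤ) := by exact_mod_cast h
        rw [this]
        ring_nf
      rw [this]; exact rfl
    · -- i₁ > j₁ : row = Φ (shift by (i₁-j₁)*N₂)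
      refine Submodule.mem_sup_left ⟨_, hshift ((((i₁:ℕ):ℤ) - ((j₁:ℕ):ℤ)) * N₂), ?_⟩
      funext p
      obtain ⟨i₂, j₂⟩ := p
      have e := hentry i₁ j₁ i₂ j₂
      have hi₁ : ((j₁:ℕ):ℤ) < ((i₁:ℕ):ℤ) := by exact_mod_cast h
      have hii₁ : ((i₁:ℕ):ℤ) < N₁ := by exact_mod_cast i₁.2
      have hi₂ : ((i₂:ℕ):ℤ) < N₂ := by exact_mod_cast i₂.2
      have hj₂ : ((j₂:ℕ):ℤ) < N₂ := by exact_mod_cast j₂.2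
      have hi₂0 : (0:ℤ) ≤ ((i₂:ℕ):ℤ) := Int.ofNat_nonneg _
      have hj₂0 : (0:ℤ) ≤ ((j₂:ℕ):ℤ) := Int.ofNat_nonneg _
      have hj₁0 : (0:ℤ) ≤ ((j₁:ℕ):ℤ) := Int.ofNat_nonneg _
      set a : ℤ := (((i₁:ℕ):ℤ) - ((j₁:ℕ):ℤ)) * N₂ + (((i₂:ℕ):ℤ) - ((j₂:ℕ):ℤ)) with ha
      have hMcast : M = (N₁:ℤ) * N₂ := by simp [hMdef]
      have h1 : (0:ℤ) ≤ a := by nlinarith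
      have h2 : a < M := by rw [hMcast]; nlinarith
      have hmod : a % M = a := Int.emod_eq_of_lt h1 h2
      show f _ = _
      rw [e, hmod]
      congr 1
      ring
  -- finite dimensionality of W
  have hfd1 : FiniteDimensional ℂ (Submodule.map Φ V) := Module.Finite.map V Φ
  have hfd2 : FiniteDimensional ℂ (Submodule.span ℂ ({r₀} : Set _)) :=
    FiniteDimensional.span_singleton ℂ r₀
  have hfdW : FiniteDimensional ℂ W := Submodule.finiteDimensional_sup _ _
  calc Matrix.rank Ahat
      = Module.finrank ℂ (Submodule.span ℂ (Set.range Ahat)) :=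
        Matrix.rank_eq_finrank_span_row Ahat
    _ ≤ Module.finrank ℂ W :=
        Submodule.finrank_mono (Submodule.span_le.2 (Set.range_subset_iff.2 hrow))
    _ ≤ Module.finrank ℂ (Submodule.map Φ V)
          + Module.finrank ℂ (Submodule.span ℂ ({r₀} : Set _)) :=
        Submodule.finrank_add_le_finrank_add_finrank _ _
    _ ≤ Module.finrank ℂ V + 1 := by
        gcongr
        · exact Submodule.finrank_map_le Φ V
        · exact (finrank_span_le_card _).trans (by simp)
    _ = 1 + Module.finrank ℂ V := by ring
end

section
/- Let f : ℤ → ℂ be a function such that the ℂ-linear span V = span{f(· + q) : q ∈ ℤ} of its integer shifts is finite-dimensional, let L ≥ 2, and let A ∈ ℂ^{2^L×2^L} be the circulant with entries A_{i,j} = f((i − j) mod 2^L). Then for every k ∈ {1, …, L−1}, the k-th reshaped matrix Â_k satisfies rank(Â_k) ≤ 1 + dim V; that is, A admits a QTT representation with all ranks at most 1 + dim V. -/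
/-- Value of an integer cast into `ZMod n` when we know an in-range representative. -/
lemma zmod_val_of_rep (n : ℕ) [NeZero n] (z t : ℤ) (hd : (n : ℤ) ∣ z - t)
    (h0 : 0 ≤ t) (h1 : t < n) : (((z : ZMod n)).val : ℤ) = t := by
  have hz : (z : ZMod n) = (t : ZMod n) := by
    rw [ZMod.intCast_eq_intCast_iff]
    exact Int.ModEq.symm ((Int.modEq_iff_dvd).mpr (by simpa using hd))
  rw [hz, ZMod.val_intCast, Int.emod_eq_of_lt h0 h1]

/-- If the span of the integer shifts of `f : ℤ → ℂ` is finite-dimensional, the circulant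
`A ∈ ℂ^{2^L × 2^L}` with entries `A i j = f ((i - j) mod 2^L)` admits a QTT representation
with all ranks at most `1 + dim V`: every `k`-th reshaped matrix
`Â_k (i₁,j₁) (i₂,j₂) = A (i₁·2^{L-k} + i₂) (j₁·2^{L-k} + j₂)` has rank `≤ 1 + dim V`. -/
theorem stmt6 (f : ℤ → ℂ)
    (hV : FiniteDimensional ℂ
      ↥(Submodule.span ℂ (Set.range fun q : ℤ => fun i : ℤ => f (i + q))))
    (L : ℕ) (hL : 2 ≤ L)
    (A : Matrix (ZMod (2 ^ L)) (ZMod (2 ^ L)) ℂ)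
    (hA : ∀ i j : ZMod (2 ^ L), A i j = f (((i - j).val : ℤ))) :
    ∀ k : ℕ, 1 ≤ k → k ≤ L - 1 →
      ∀ Ahat : Matrix (Fin (2 ^ k) × Fin (2 ^ k)) (Fin (2 ^ (L - k)) × Fin (2 ^ (L - k))) ℂ,
        (∀ (i₁ j₁ : Fin (2 ^ k)) (i₂ j₂ : Fin (2 ^ (L - k))),
          Ahat (i₁, j₁) (i₂, j₂)
            = A ((((i₁ : ℕ) * 2 ^ (L - k) + (i₂ : ℕ) : ℕ) : ZMod (2 ^ L)))
                ((((j₁ : ℕ) * 2 ^ (L - k) + (j₂ : ℕ) : ℕ) : ZMod (2 ^ L)))) →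
        Matrix.rank Ahat
          ≤ 1 + Module.finrank ℂ
              ↥(Submodule.span ℂ (Set.range fun q : ℤ => fun i : ℤ => f (i + q))) := by
  intro k hk1 hkL Ahat hAhat
  haveI : NeZero (2 ^ L) := ⟨by positivity⟩
  set V : Submodule ℂ (ℤ → ℂ) :=
    Submodule.span ℂ (Set.range fun q : ℤ => fun i : ℤ => f (i + q)) with hVdef
  have hkle : k ≤ L := le_trans hkL (Nat.sub_le L 1)
  have hpow : (2 : ℤ) ^ L = 2 ^ k * 2 ^ (L - k) := by
    rw [← pow_add, Nat.add_sub_cancel' hkle]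
  -- the restriction map
  set R : (ℤ → ℂ) →ₗ[ℂ] ((Fin (2 ^ (L - k)) × Fin (2 ^ (L - k))) → ℂ) :=
    LinearMap.funLeft ℂ ℂ (fun p => ((p.1 : ℤ) - (p.2 : ℤ))) with hRdef
  -- the wrap-around row
  set w : (Fin (2 ^ (L - k)) × Fin (2 ^ (L - k))) → ℂ :=
    fun p => A (((p.1 : ℕ) : ZMod (2 ^ L))) (((p.2 : ℕ) : ZMod (2 ^ L))) with hwdef
  set W : Submodule ℂ ((Fin (2 ^ (L - k)) × Fin (2 ^ (L - k))) → ℂ) :=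
    Submodule.map R V ⊔ Submodule.span ℂ {w} with hWdef
  -- every row of Ahat lies in W
  have hrow : ∀ r : Fin (2 ^ k) × Fin (2 ^ k), Ahat r ∈ W := by
    rintro ⟨i₁, j₁⟩
    by_cases hij : i₁ = j₁
    · -- row equals w
      subst hij
      have : Ahat (i₁, i₁) = w := by
        funext p
        obtain ⟨i₂, j₂⟩ := p
        rw [hAhat]
        show A _ _ = A _ _
        rw [hA, hA]
        congr 2
        push_cast
        ring
      rw [this]
      exact Submodule.mem_sup_right (Submodule.subset_span rfl)
    · -- row equals a shifted restriction
      set δ : ℤ := ((i₁ : ℤ) - (j₁ : ℤ)) % (2 ^ k) with hδdef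
      have h2k : (0 : ℤ) < 2 ^ k := by positivity
      have hi1 : ((i₁ : ℕ) : ℤ) < 2 ^ k := by exact_mod_cast i₁.isLt
      have hj1 : ((j₁ : ℕ) : ℤ) < 2 ^ k := by exact_mod_cast j₁.isLt
      have hi1' : (0 : ℤ) ≤ ((i₁ : ℕ) : ℤ) := Int.natCast_nonneg _
      have hj1' : (0 : ℤ) ≤ ((j₁ : ℕ) : ℤ) := Int.natCast_nonneg _
      have hδ0 : 0 ≤ δ := Int.emod_nonneg _ (ne_of_gt h2k)
      have hδlt : δ < 2 ^ k := Int.emod_lt_of_pos _ h2k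
      have hδne : δ ≠ 0 := by
        intro h
        apply hij
        have hdvd : (2 ^ k : ℤ) ∣ (i₁ : ℤ) - (j₁ : ℤ) := Int.dvd_of_emod_eq_zero h
        have habs : |(i₁ : ℤ) - (j₁ : ℤ)| < 2 ^ k := by
          rw [abs_lt]; constructor <;> linarith
        have h0 := Int.eq_zero_of_abs_lt_dvd hdvd habs
        have : (i₁ : ℕ) = (j₁ : ℕ) := by omega
        exact Fin.ext this
      have hδ1 : 1 ≤ δ := lt_of_le_of_ne hδ0 (Ne.symm hδne)
      set q : ℤ := δ * 2 ^ (L - k) with hqdef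
      have hgV : (fun i : ℤ => f (i + q)) ∈ V := Submodule.subset_span ⟨q, rfl⟩
      have : Ahat (i₁, j₁) = R (fun i : ℤ => f (i + q)) := by
        funext p
        obtain ⟨i₂, j₂⟩ := p
        rw [hAhat, hA]
        show f _ = f (((i₂ : ℤ) - (j₂ : ℤ)) + q)
        congr 1
        have h2Lk : (0 : ℤ) < 2 ^ (L - k) := by positivity
        have hi2 : ((i₂ : ℕ) : ℤ) < 2 ^ (L - k) := by exact_mod_cast i₂.isLt
        have hj2 : ((j₂ : ℕ) : ℤ) < 2 ^ (L - k) := by exact_mod_cast j₂.isLt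
        have hi2' : (0 : ℤ) ≤ ((i₂ : ℕ) : ℤ) := Int.natCast_nonneg _
        have hj2' : (0 : ℤ) ≤ ((j₂ : ℕ) : ℤ) := Int.natCast_nonneg _
        have hd : (((2 ^ L : ℕ) : ℤ)) ∣
            (((i₁ : ℕ) * 2 ^ (L - k) + (i₂ : ℕ) : ℤ) - ((j₁ : ℕ) * 2 ^ (L - k) + (j₂ : ℕ) : ℤ))
              - (((i₂ : ℤ) - (j₂ : ℤ)) + q) := by
          have hdvd : (2 ^ k : ℤ) ∣ ((i₁ : ℤ) - (j₁ : ℤ)) - δ :=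
            Int.dvd_self_sub_of_emod_eq rfl
          obtain ⟨c, hc⟩ := hdvd
          refine ⟨c, ?_⟩
          rw [hqdef]
          push_cast [hpow]
          linear_combination (2 : ℤ) ^ (L - k) * hc
        have hcast : ((((i₁ : ℕ) * 2 ^ (L - k) + (i₂ : ℕ) : ℕ) : ZMod (2 ^ L))
              - (((j₁ : ℕ) * 2 ^ (L - k) + (j₂ : ℕ) : ℕ) : ZMod (2 ^ L)))
            = (((((i₁ : ℕ) * 2 ^ (L - k) + (i₂ : ℕ) : ℤ)
                - ((j₁ : ℕ) * 2 ^ (L - k) + (j₂ : ℕ) : ℤ)) : ℤ) : ZMod (2 ^ L)) := by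
          push_cast
          ring
        rw [hcast]
        have hq1 : (2 : ℤ) ^ (L - k) ≤ q := by
          rw [hqdef]
          calc (2 : ℤ) ^ (L - k) = 1 * 2 ^ (L - k) := (one_mul _).symm
            _ ≤ δ * 2 ^ (L - k) := mul_le_mul_of_nonneg_right hδ1 h2Lk.le
        have hq2 : q ≤ (2 : ℤ) ^ k * 2 ^ (L - k) - 2 ^ (L - k) := by
          rw [hqdef, ← sub_one_mul]
          exact mul_le_mul_of_nonneg_right (by linarith) h2Lk.le
        refine zmod_val_of_rep _ _ _ hd ?_ ?_
        · linarith
        · have h2L : ((2 ^ L : ℕ) : ℤ) = 2 ^ k * 2 ^ (L - k) := by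
            push_cast
            exact hpow
          rw [h2L]
          linarith
      rw [this]
      exact Submodule.mem_sup_left ⟨_, hgV, rfl⟩
  -- conclude
  rw [Matrix.rank_eq_finrank_span_row]
  have hle : Submodule.span ℂ (Set.range Ahat) ≤ W :=
    Submodule.span_le.mpr (by rintro _ ⟨r, rfl⟩; exact hrow r)
  haveI : FiniteDimensional ℂ (Submodule.map R V : Submodule ℂ _) :=
    FiniteDimensional.finiteDimensional_submodule _
  calc Module.finrank ℂ ↥(Submodule.span ℂ (Set.range Ahat))
      ≤ Module.finrank ℂ ↥W := Submodule.finrank_mono hle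
    _ ≤ Module.finrank ℂ ↥(Submodule.map R V)
          + Module.finrank ℂ ↥(Submodule.span ℂ ({w} : Set _)) :=
        Submodule.finrank_add_le_finrank_add_finrank _ _
    _ ≤ Module.finrank ℂ ↥V + 1 := by
        gcongr
        · exact Submodule.finrank_map_le R V
        · simpa using finrank_span_le_card ({w} : Set _)
    _ = 1 + Module.finrank ℂ ↥V := by omega
end

section
/- Let L ≥ 2, let z_1, …, z_s ∈ ℂ, let P_1, …, P_s be complex polynomials of degrees p_1, …, p_s respectively, and let A ∈ ℂ^{2^L×2^L} be the circulant with entries A_{i,j} = f((i − j) mod 2^L), where f(i) = ∑_{k=1}^{s} P_k(i) z_k^i for i ∈ ℤ (with the convention 0^0 = 1 if some z_k = 0). Then for every k ∈ {1, …, L−1}, the k-th reshaped matrix Â_k satisfies rank(Â_k) ≤ s + 1 + p_1 + ⋯ + p_s; that is, the QTT ranks of A do not exceed s + 1 + p_1 + ⋯ + p_s. -/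
private lemma zpow_split7 (z : ℂ) (c d : ℤ) (h0 : c + d = 0 → c = 0) :
    z ^ (c + d) = z ^ c * z ^ d := by
  rcases eq_or_ne z 0 with rfl | hz
  · rcases eq_or_ne c 0 with rfl | hc
    · simp
    · rw [zero_zpow _ (fun h => hc (h0 h)), zero_zpow _ hc, zero_mul]
  · exact zpow_add₀ hz c d

private lemma taylor_sum7 (Q : Polynomial ℂ) (n : ℕ) (hn : Q.natDegree = n) (a b : ℂ) :
    ∑ t : Fin (n + 1), (Polynomial.taylor a Q).coeff (t : ℕ) * b ^ (t : ℕ) = Q.eval (a + b) := by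
  have hdeg : (Polynomial.taylor a Q).natDegree = n := by
    rw [Polynomial.natDegree_taylor, hn]
  rw [Fin.sum_univ_eq_sum_range (fun t => (Polynomial.taylor a Q).coeff t * b ^ t),
    ← hdeg, ← Polynomial.eval_eq_sum_range, Polynomial.taylor_eval, add_comm]

private lemma key7 (N1 N2 M : ℕ) (hN1 : 0 < N1) (hN2 : 0 < N2) (hM : M = N1 * N2)
    (s : ℕ) (z : Fin s → ℂ) (P : Fin s → Polynomial ℂ)
    (p : Fin s → ℕ) (hdeg : ∀ k : Fin s, (P k).natDegree = p k)
    (f : ℤ → ℂ)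
    (hf : ∀ i : ℤ, f i = ∑ k : Fin s, Polynomial.eval (i : ℂ) (P k) * z k ^ i)
    (A : Matrix (ZMod M) (ZMod M) ℂ)
    (hA : ∀ i j : ZMod M, A i j = f (((i - j).val : ℤ)))
    (Ahat : Matrix (Fin N1 × Fin N1) (Fin N2 × Fin N2) ℂ)
    (hAhat : ∀ (i₁ j₁ : Fin N1) (i₂ j₂ : Fin N2),
      Ahat (i₁, j₁) (i₂, j₂)
        = A ((((i₁ : ℕ) * N2 + (i₂ : ℕ) : ℕ) : ZMod M))
            ((((j₁ : ℕ) * N2 + (j₂ : ℕ) : ℕ) : ZMod M))) :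
    Matrix.rank Ahat ≤ s + 1 + ∑ k : Fin s, p k := by
  haveI : NeZero M := ⟨by rw [hM]; exact (Nat.mul_pos hN1 hN2).ne'⟩
  have hMZ : (M : ℤ) = (N1 : ℤ) * (N2 : ℤ) := by exact_mod_cast hM
  set c1 : Fin N1 × Fin N1 → ℤ := fun r => (((r.1 : ℤ) - (r.2 : ℤ)) % (N1 : ℤ)) * (N2 : ℤ)
    with hc1
  set d2 : Fin N2 × Fin N2 → ℤ := fun c => (c.1 : ℤ) - (c.2 : ℤ) with hd2
  have hN1Z : (0 : ℤ) < (N1 : ℤ) := by exact_mod_cast hN1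
  have hN2Z : (0 : ℤ) < (N2 : ℤ) := by exact_mod_cast hN2
  have hd2lt : ∀ c : Fin N2 × Fin N2, -(N2 : ℤ) < d2 c ∧ d2 c < (N2 : ℤ) := by
    intro c
    have h1 := (c.1).isLt
    have h2 := (c.2).isLt
    constructor <;> simp only [hd2] <;> omega
  have hc1nonneg : ∀ r, 0 ≤ c1 r :=
    fun r => mul_nonneg (Int.emod_nonneg _ hN1Z.ne') hN2Z.le
  have hc1big : ∀ r : Fin N1 × Fin N1, r.1 ≠ r.2 → (N2 : ℤ) ≤ c1 r := by
    intro r hne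
    have hd1ne : (r.1 : ℤ) - (r.2 : ℤ) ≠ 0 := by
      intro h
      exact hne (Fin.ext (by omega))
    have hnz : ((r.1 : ℤ) - (r.2 : ℤ)) % (N1 : ℤ) ≠ 0 := by
      intro h0
      have hdvd : (N1 : ℤ) ∣ ((r.1 : ℤ) - (r.2 : ℤ)) := Int.dvd_of_emod_eq_zero h0
      have hle : (N1 : ℤ) ≤ |(r.1 : ℤ) - (r.2 : ℤ)| :=
        Int.le_of_dvd (abs_pos.mpr hd1ne) ((dvd_abs _ _).mpr hdvd)
      have h1 := (r.1).isLt
      have h2 := (r.2).isLt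
      have habs : |(r.1 : ℤ) - (r.2 : ℤ)| < (N1 : ℤ) := abs_lt.mpr (by constructor <;> omega)
      omega
    have h1 : 1 ≤ ((r.1 : ℤ) - (r.2 : ℤ)) % (N1 : ℤ) := by
      have := Int.emod_nonneg ((r.1 : ℤ) - (r.2 : ℤ)) hN1Z.ne'
      omega
    calc (N2 : ℤ) = 1 * N2 := (one_mul _).symm
    _ ≤ _ := mul_le_mul_of_nonneg_right h1 hN2Z.le
  have hc1zero : ∀ r c, c1 r + d2 c = 0 → c1 r = 0 := by
    intro r c h
    by_contra hne
    have hO : 0 < c1 r := lt_of_le_of_ne (hc1nonneg r) (Ne.symm hne)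
    have hrne : r.1 ≠ r.2 := by
      intro he
      apply hne
      simp [hc1, he]
    have := hc1big r hrne
    have := (hd2lt c).1
    omega
  have hc1eqzero : ∀ r : Fin N1 × Fin N1, r.1 = r.2 → c1 r = 0 := by
    intro r he
    simp [hc1, he]
  have hc1lt : ∀ r, c1 r ≤ ((N1 : ℤ) - 1) * N2 := by
    intro r
    have : ((r.1 : ℤ) - (r.2 : ℤ)) % (N1 : ℤ) ≤ (N1 : ℤ) - 1 := by
      have := Int.emod_lt_of_pos ((r.1 : ℤ) - (r.2 : ℤ)) hN1Z
      omega
    exact mul_le_mul_of_nonneg_right this hN2Z.le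
  -- the key index computation
  have hval : ∀ (i1 j1 : Fin N1) (i2 j2 : Fin N2), i1 ≠ j1 →
      (((((i1 : ℕ) * N2 + (i2 : ℕ) : ℕ) : ZMod M)
        - (((j1 : ℕ) * N2 + (j2 : ℕ) : ℕ) : ZMod M)).val : ℤ)
        = c1 (i1, j1) + d2 (i2, j2) := by
    intro i1 j1 i2 j2 hne
    set w : ℤ := ((i1 : ℤ) * N2 + (i2 : ℤ)) - ((j1 : ℤ) * N2 + (j2 : ℤ)) with hw
    have hcast : ((((i1 : ℕ) * N2 + (i2 : ℕ) : ℕ) : ZMod M)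
        - (((j1 : ℕ) * N2 + (j2 : ℕ) : ℕ) : ZMod M)) = ((w : ℤ) : ZMod M) := by
      push_cast [hw]; ring
    rw [hcast, ZMod.val_intCast (n := M) w]
    set d1 : ℤ := (i1 : ℤ) - (j1 : ℤ) with hd1
    have hdvd : (M : ℤ) ∣ ((c1 (i1, j1) + d2 (i2, j2)) - w) := by
      have he : (c1 (i1, j1) + d2 (i2, j2)) - w = (d1 % N1 - d1) * N2 := by
        simp only [hc1, hd2, hw, hd1]; ring
      rw [he, Int.emod_def, hMZ]
      exact ⟨-(d1 / N1), by ring⟩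
    have hmod : w % (M : ℤ) = (c1 (i1, j1) + d2 (i2, j2)) % (M : ℤ) :=
      Int.modEq_iff_dvd.mpr hdvd
    have hlow : 0 ≤ c1 (i1, j1) + d2 (i2, j2) := by
      have := hc1big (i1, j1) hne
      have := (hd2lt (i2, j2)).1
      omega
    have hhigh : c1 (i1, j1) + d2 (i2, j2) < (M : ℤ) := by
      have := hc1lt (i1, j1)
      have := (hd2lt (i2, j2)).2
      rw [hMZ]
      nlinarith
    rw [hmod, Int.emod_eq_of_lt hlow hhigh]
  -- separable factors
  have o1 : Fin N1 := ⟨0, hN1⟩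
  let v : ((κ : Fin s) × Fin (p κ + 1)) → (Fin N2 × Fin N2) → ℂ :=
    fun σ c => z σ.1 ^ (d2 c) * ((d2 c : ℤ) : ℂ) ^ (σ.2 : ℕ)
  let B : Matrix (Fin N1 × Fin N1) (Option ((κ : Fin s) × Fin (p κ + 1))) ℂ :=
    fun r o => Option.rec (if r.1 = r.2 then (1 : ℂ) else 0)
      (fun σ => z σ.1 ^ (c1 r) * (Polynomial.taylor ((c1 r : ℤ) : ℂ) (P σ.1)).coeff (σ.2 : ℕ)) o
  let C : Matrix (Option ((κ : Fin s) × Fin (p κ + 1))) (Fin N2 × Fin N2) ℂ :=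
    fun o c => Option.rec
      (Ahat (o1, o1) c - ∑ σ : (κ : Fin s) × Fin (p κ + 1), B (o1, o1) (some σ) * v σ c)
      (fun σ => v σ c) o
  have hS : ∀ (r : Fin N1 × Fin N1) (c : Fin N2 × Fin N2),
      ∑ σ : (κ : Fin s) × Fin (p κ + 1), B r (some σ) * v σ c
        = ∑ κ : Fin s, Polynomial.eval (((c1 r + d2 c : ℤ)) : ℂ) (P κ) * z κ ^ (c1 r + d2 c) := by
    intro r c
    rw [← Finset.univ_sigma_univ, Finset.sum_sigma]
    refine Finset.sum_congr rfl fun κ _ => ?_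
    have hz : z κ ^ (c1 r + d2 c) = z κ ^ (c1 r) * z κ ^ (d2 c) :=
      zpow_split7 _ _ _ (hc1zero r c)
    calc (∑ t : Fin (p κ + 1), B r (some ⟨κ, t⟩) * v ⟨κ, t⟩ c)
        = (z κ ^ (c1 r) * z κ ^ (d2 c)) *
          ∑ t : Fin (p κ + 1),
            (Polynomial.taylor ((c1 r : ℤ) : ℂ) (P κ)).coeff (t : ℕ) * ((d2 c : ℤ) : ℂ) ^ (t : ℕ) := by
          rw [Finset.mul_sum]
          exact Finset.sum_congr rfl fun t _ => by simp only [B, v]; ring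
      _ = Polynomial.eval (((c1 r + d2 c : ℤ)) : ℂ) (P κ) * z κ ^ (c1 r + d2 c) := by
          rw [taylor_sum7 (P κ) (p κ) (hdeg κ) _ _, hz]
          push_cast
          ring
  -- main identity
  have hmain : ∀ r c, Ahat r c = ∑ o : Option ((κ : Fin s) × Fin (p κ + 1)), B r o * C o c := by
    intro r c
    rw [univ_option, Finset.sum_insertNone]
    obtain ⟨i1, j1⟩ := r
    obtain ⟨i2, j2⟩ := c
    have hCs : ∀ σ : (κ : Fin s) × Fin (p κ + 1), C (some σ) (i2, j2) = v σ (i2, j2) := fun _ => rfl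
    simp only [hCs]
    by_cases he : i1 = j1
    · subst he
      have hB : B (i1, i1) none = 1 := if_pos rfl
      have hC : C none (i2, j2) = Ahat (o1, o1) (i2, j2)
          - ∑ σ : (κ : Fin s) × Fin (p κ + 1), B (o1, o1) (some σ) * v σ (i2, j2) := rfl
      rw [hB, hC, one_mul, hS, hS]
      rw [hc1eqzero (i1, i1) rfl, hc1eqzero (o1, o1) rfl]
      rw [hAhat, hAhat, hA, hA]
      push_cast
      ring_nf
    · have hB : B (i1, j1) none = 0 := if_neg he
      rw [hB, zero_mul, zero_add, hS]
      rw [hAhat, hA, hval i1 j1 i2 j2 he, hf]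
  -- conclude
  have hfact : Ahat = B * C := by
    ext r c
    rw [Matrix.mul_apply]
    exact hmain r c
  calc Ahat.rank = (B * C).rank := by rw [hfact]
    _ ≤ B.rank := Matrix.rank_mul_le_left _ _
    _ ≤ Fintype.card (Option ((κ : Fin s) × Fin (p κ + 1))) := Matrix.rank_le_card_width B
    _ ≤ s + 1 + ∑ κ : Fin s, p κ := by
        rw [Fintype.card_option, Fintype.card_sigma]
        simp only [Fintype.card_fin]
        rw [Finset.sum_add_distrib, Finset.sum_const, Finset.card_univ, Fintype.card_fin,
          smul_eq_mul, mul_one]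
        omega

/-- Let `f i = ∑_{k} P_k(i) z_k^i` with `P_k` polynomials of degrees `p_k`.  Then the
circulant `A ∈ ℂ^{2^L × 2^L}` with entries `A i j = f ((i - j) mod 2^L)` has QTT ranks at
most `s + 1 + p_1 + ⋯ + p_s`: every `k`-th reshaped matrix of `A` has rank at most that. -/
theorem stmt7 (L : ℕ) (hL : 2 ≤ L) (s : ℕ) (z : Fin s → ℂ) (P : Fin s → Polynomial ℂ)
    (p : Fin s → ℕ) (hdeg : ∀ k : Fin s, (P k).natDegree = p k)
    (f : ℤ → ℂ)
    (hf : ∀ i : ℤ, f i = ∑ k : Fin s, Polynomial.eval (i : ℂ) (P k) * z k ^ i)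
    (A : Matrix (ZMod (2 ^ L)) (ZMod (2 ^ L)) ℂ)
    (hA : ∀ i j : ZMod (2 ^ L), A i j = f (((i - j).val : ℤ))) :
    ∀ k : ℕ, 1 ≤ k → k ≤ L - 1 →
      ∀ Ahat : Matrix (Fin (2 ^ k) × Fin (2 ^ k)) (Fin (2 ^ (L - k)) × Fin (2 ^ (L - k))) ℂ,
        (∀ (i₁ j₁ : Fin (2 ^ k)) (i₂ j₂ : Fin (2 ^ (L - k))),
          Ahat (i₁, j₁) (i₂, j₂)
            = A ((((i₁ : ℕ) * 2 ^ (L - k) + (i₂ : ℕ) : ℕ) : ZMod (2 ^ L)))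
                ((((j₁ : ℕ) * 2 ^ (L - k) + (j₂ : ℕ) : ℕ) : ZMod (2 ^ L)))) →
        Matrix.rank Ahat ≤ s + 1 + ∑ k : Fin s, p k := by
  intro k hk1 hk2 Ahat hAhat
  exact key7 (2 ^ k) (2 ^ (L - k)) (2 ^ L) (by positivity) (by positivity)
    (by rw [← pow_add]; congr 1; omega) s z P p hdeg f hf A hA Ahat hAhat
end

section
/- Let L ≥ 2, let m ≥ 2 and n ≥ 0 be integers with 2^L ≥ m + n, let a_{−n}, …, a_{m−1} ∈ ℂ with a_{m−1} ≠ 0 and a_{−n} ≠ 0, and let A ∈ ℂ^{2^L×2^L} be the band circulant circ(a_0, …, a_{m−1}, 0, …, 0, a_{−n}, …, a_{−1}). Assume the polynomial g(z) = ∑_{k=−n}^{m−1} a_k z^{k+n} has no zeros on the unit circle. Then A is invertible and for every k ∈ {1, …, L−1}, the k-th reshaped matrix of A^{−1} has rank at most m + n; that is, the QTT ranks of A^{−1} do not exceed m + n. -/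
/-- The band circulant matrix `circ(a_0, …, a_{m-1}, 0, …, 0, a_{-n}, …, a_{-1})`,
indexed by `ZMod N`. -/
noncomputable def bandCirculant (N m n : ℕ) [NeZero N] (a : ℤ → ℂ) :
    Matrix (ZMod N) (ZMod N) ℂ :=
  Matrix.of fun i j =>
    if ((i - j).val : ℤ) ≤ (m : ℤ) - 1 then a ((i - j).val : ℤ)
    else if (N : ℤ) - (n : ℤ) ≤ ((i - j).val : ℤ) then a (((i - j).val : ℤ) - (N : ℤ))
    else 0

/-!
The band circulant `A` is the circulant matrix of its symbol `c`, and every additive character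
`ψ` of `ZMod N` is a left eigenvector of `A` with eigenvalue `∑ₜ c t ψ t = g(ψ 1) / ψ n`. Since
`ψ 1` lies on the unit circle these eigenvalues are nonzero, and since the characters separate
vectors (the discrete Fourier transform is injective), `A` is invertible.

The inverse is again circulant, with first column `b`, and `A b = e₀` says that `b` satisfies the
linear recurrence with coefficients `a_{m-1}, …, a_{-n}` at every position away from `0`. In the
reshaped matrix the row `(i₁, j₁)` reads `b` on the window `(i₁ - j₁) N₂ + (-N₂, N₂)`. For
`i₁ ≠ j₁` this window avoids `0`, so the row solves the recurrence on the whole window; as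
`a_{-n} ≠ 0` such solutions are determined by their first `m + n - 1` values. The rows with
`i₁ = j₁` all coincide, so the rank is at most `m + n`.
-/

open Finset Matrix Module Polynomial

namespace Matrix

theorem inv_circulant {α n : Type*} [CommRing α] [Fintype n] [DecidableEq n] [AddGroup n]
    (v : n → α) : (circulant v)⁻¹ = circulant fun i => (circulant v)⁻¹ i 0 := by
  have hshift (c : n) :
      (circulant v)⁻¹ = (circulant v)⁻¹.submatrix (Equiv.addRight c) (Equiv.addRight c) := by
    have hA : (circulant v).submatrix (Equiv.addRight c) (Equiv.addRight c) = circulant v := by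
      ext i j
      simp [circulant_apply]
    rw [← inv_submatrix_equiv, hA]
  ext i j
  simpa using (congrFun (congrFun (hshift j) (i - j)) 0).symm

theorem vecMul_circulant_addChar {R G : Type*} [CommRing R] [AddCommGroup G] [Fintype G]
    (v : G → R) (ψ : AddChar G R) : ψ ᵥ* circulant v = (∑ t, v t * ψ t) • ⇑ψ := by
  ext j
  rw [vecMul, dotProduct, ← Equiv.sum_comp (Equiv.addRight j)]
  simp only [Equiv.coe_addRight, circulant_apply, add_sub_cancel_right, AddChar.map_add_eq_mul,
    Pi.smul_apply, smul_eq_mul, sum_mul]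
  exact sum_congr rfl fun t _ => by ring

open ZMod in
theorem isUnit_circulant_of_forall_addChar {N : ℕ} [NeZero N] (v : ZMod N → ℂ)
    (hv : ∀ ψ : AddChar (ZMod N) ℂ, ∑ t, v t * ψ t ≠ 0) : IsUnit (circulant v) := by
  refine mulVec_injective_iff_isUnit.1 ((injective_iff_map_eq_zero (circulant v).mulVecLin).2
    fun x hx => ?_)
  have horth (ψ : AddChar (ZMod N) ℂ) : ⇑ψ ⬝ᵥ x = 0 := by
    have := congrArg (⇑ψ ⬝ᵥ ·) hx
    simp only [mulVecLin_apply, dotProduct_mulVec, vecMul_circulant_addChar, smul_dotProduct,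
      smul_eq_mul, dotProduct_zero] at this
    exact (mul_eq_zero.1 this).resolve_left (hv ψ)
  have hdft : 𝓕 x = 0 := by
    ext k
    rw [dft_apply, Pi.zero_apply, ← horth (stdAddChar.mulShift (-k))]
    exact sum_congr rfl fun j _ => by simp [mul_comm]
  simpa using hdft

end Matrix

theorem ZMod.sum_eq_sum_range {M : Type*} [AddCommMonoid M] {N : ℕ} [NeZero N]
    (G : ZMod N → M) : ∑ t, G t = ∑ k ∈ range N, G k :=
  sum_nbij' ZMod.val (↑) (fun t _ => mem_range.2 t.val_lt) (fun _ _ => mem_univ _)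
    (fun t _ => ZMod.natCast_zmod_val t) (fun _ hk => ZMod.val_cast_of_lt (mem_range.1 hk))
    (fun t _ => by rw [ZMod.natCast_zmod_val])

section Band

variable {N m n : ℕ} {a : ℤ → ℂ}

variable (N m n a) in
noncomputable def bandSymbol (t : ZMod N) : ℂ :=
  if (t.val : ℤ) ≤ (m : ℤ) - 1 then a (t.val : ℤ)
  else if (N : ℤ) - (n : ℤ) ≤ (t.val : ℤ) then a ((t.val : ℤ) - (N : ℤ))
  else 0

variable (N m n a) in
theorem bandCirculant_eq_circulant [NeZero N] :
    bandCirculant N m n a = circulant (bandSymbol N m n a) :=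
  rfl

theorem bandSymbol_intCast_natCast_sub [NeZero N] (hmn : m + n ≤ N) {k : ℕ} (hk : k < N) :
    bandSymbol N m n a (((k : ℤ) - n : ℤ) : ZMod N) = if k < m + n then a (k - n) else 0 := by
  have hval : ((((k : ℤ) - n : ℤ) : ZMod N).val : ℤ)
      = if k < n then (k : ℤ) - n + N else (k : ℤ) - n := by
    rw [ZMod.val_intCast]
    split_ifs with h
    · rw [Int.emod_eq_add_self_emod, Int.emod_eq_of_lt (by omega) (by omega)]
    · exact Int.emod_eq_of_lt (by omega) (by omega)
  unfold bandSymbol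
  rw [hval]
  split_ifs <;> first | rfl | (congr 1; omega)

theorem sum_bandSymbol_mul [NeZero N] (hmn : m + n ≤ N) (f : ZMod N → ℂ) :
    ∑ t, bandSymbol N m n a t * f t
      = ∑ k ∈ range (m + n), a (k - n) * f (((k : ℤ) - n : ℤ) : ZMod N) := by
  rw [← Equiv.sum_comp (Equiv.subRight (n : ZMod N)), ZMod.sum_eq_sum_range]
  have hterm : ∀ k ∈ range N, bandSymbol N m n a (k - n) * f (k - n)
      = if k < m + n then a (k - n) * f (((k : ℤ) - n : ℤ) : ZMod N) else 0 := fun k hk => by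
    have hcast : ((k : ZMod N) - n) = (((k : ℤ) - n : ℤ) : ZMod N) := by push_cast; rfl
    rw [hcast, bandSymbol_intCast_natCast_sub hmn (mem_range.1 hk), ite_mul, zero_mul]
  simp only [Equiv.subRight_apply]
  rw [sum_congr rfl hterm, ← sum_subset (range_subset_range.2 hmn)
    fun k _ hk => if_neg (by simpa using hk)]
  exact sum_congr rfl fun k hk => if_pos (mem_range.1 hk)

theorem sum_bandSymbol_mul_addChar_mul [NeZero N] (hmn : m + n ≤ N)
    (ψ : AddChar (ZMod N) ℂ) :
    (∑ t, bandSymbol N m n a t * ψ t) * ψ n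
      = (∑ k ∈ range (m + n), C (a (k - n)) * X ^ k).eval (ψ 1) := by
  rw [sum_bandSymbol_mul hmn, sum_mul, eval_finsetSum]
  refine sum_congr rfl fun k _ => ?_
  have hψ : ψ (((k : ℤ) - n : ℤ) : ZMod N) * ψ n = ψ 1 ^ k := by
    rw [← AddChar.map_add_eq_mul, ← AddChar.map_nsmul_eq_pow, nsmul_one]
    push_cast; ring_nf
  rw [mul_assoc, hψ]
  simp

theorem isUnit_bandCirculant [NeZero N] (hmn : m + n ≤ N)
    (hg : ∀ u : ℂ, ‖u‖ = 1 → (∑ k ∈ range (m + n), C (a (k - n)) * X ^ k).eval u ≠ 0) :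
    IsUnit (bandCirculant N m n a) := by
  rw [bandCirculant_eq_circulant]
  refine isUnit_circulant_of_forall_addChar _ fun ψ hψ => ?_
  refine hg (ψ 1) (ψ.norm_apply 1) ?_
  rw [← sum_bandSymbol_mul_addChar_mul hmn, hψ, zero_mul]

theorem bandCirculant_inv_recurrence [NeZero N] (hm : 1 ≤ m) (hmn : m + n ≤ N)
    (hA : IsUnit (bandCirculant N m n a)) {d : ZMod N} (hd : d + (m - 1 : ℕ) ≠ 0) :
    ∑ j ∈ range (m + n), a ((m : ℤ) - 1 - j) * (bandCirculant N m n a)⁻¹ (d + j) 0 = 0 := by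
  set A := bandCirculant N m n a
  have hreflect : ∀ k ∈ range (m + n),
      a ((m : ℤ) - 1 - (m + n - 1 - k : ℕ)) * A⁻¹ (d + (m + n - 1 - k : ℕ)) 0
        = a (k - n) * A⁻¹ (d + (m - 1 : ℕ) - (((k : ℤ) - n : ℤ) : ZMod N)) 0 := by
    intro k hk
    have hk := mem_range.1 hk
    have hcast := congrArg (Nat.cast : ℕ → ZMod N) (show m + n - 1 - k + k = (m - 1) + n by omega)
    push_cast at hcast
    have hidx : d + ((m + n - 1 - k : ℕ) : ZMod N)
        = d + (m - 1 : ℕ) - (((k : ℤ) - n : ℤ) : ZMod N) := by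
      push_cast
      linear_combination hcast
    rw [hidx, show (m : ℤ) - 1 - (m + n - 1 - k : ℕ) = k - n by omega]
  rw [← sum_range_reflect, sum_congr rfl hreflect,
    ← sum_bandSymbol_mul hmn (fun t => A⁻¹ (d + (m - 1 : ℕ) - t) 0)]
  have hinv := congrFun (congrFun (mul_nonsing_inv A ((isUnit_iff_isUnit_det A).1 hA))
    (d + (m - 1 : ℕ))) 0
  rw [one_apply_ne hd, mul_apply, ← Equiv.sum_comp (Equiv.subLeft (d + (m - 1 : ℕ)))] at hinv
  simpa [A, bandCirculant_eq_circulant, circulant_apply] using hinv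

end Band

section Recurrence

variable {K : Type*} [Field K]

def recurrenceSpace (q : ℕ → K) (r P : ℕ) : Submodule K (ℕ → K) where
  carrier := {f | ∀ s, s + r < P → ∑ j ∈ range (r + 1), q j * f (s + j) = 0}
  add_mem' {f g} hf hg s hs := by
    simp only [Pi.add_apply, mul_add, sum_add_distrib, hf s hs, hg s hs, add_zero]
  zero_mem' _ _ := by simp
  smul_mem' c f hf s hs := by
    simp only [Pi.smul_apply, smul_eq_mul, mul_left_comm, ← mul_sum, hf s hs, mul_zero]

variable {q : ℕ → K} {r P : ℕ}

theorem eq_zero_of_mem_recurrenceSpace (hq : q r ≠ 0) {f : ℕ → K}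
    (hf : f ∈ recurrenceSpace q r P) (hinit : ∀ i < r, f i = 0) : ∀ i < P, f i = 0 := by
  intro i
  induction i using Nat.strong_induction_on with
  | _ i ih =>
    intro hi
    rcases lt_or_ge i r with hir | hir
    · exact hinit i hir
    have hwin := hf (i - r) (by omega)
    rw [sum_range_succ, Nat.sub_add_cancel hir,
      sum_eq_zero fun j hj => by rw [ih _ (by grind) (by grind), mul_zero],
      zero_add] at hwin
    exact (mul_eq_zero.1 hwin).resolve_left hq

theorem finrank_map_recurrenceSpace_le (hq : q r ≠ 0) :
    finrank K ((recurrenceSpace q r P).map (LinearMap.funLeft K K (Fin.val : Fin P → ℕ)))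
      ≤ r := by
  set V := (recurrenceSpace q r P).map (LinearMap.funLeft K K (Fin.val : Fin P → ℕ))
  rcases le_or_gt P r with hPr | hrP
  · exact (Submodule.finrank_le V).trans (by simpa using hPr)
  let J := LinearMap.funLeft K K (Fin.castLE hrP.le)
  have hJ : Function.Injective (J ∘ₗ V.subtype) := by
    rw [← LinearMap.ker_eq_bot, LinearMap.ker_eq_bot']
    rintro ⟨_, f, hf, rfl⟩ h0
    have hinit (i : ℕ) (hi : i < r) : f i = 0 := congrFun h0 ⟨i, hi⟩
    ext i
    exact eq_zero_of_mem_recurrenceSpace hq hf hinit i i.isLt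
  simpa using LinearMap.finrank_le_finrank_of_injective hJ

end Recurrence

theorem Int.eq_of_dvd_sub_mul_add {N₁ N₂ i j : ℕ} (hi : i < N₁) (hj : j < N₁) {t : ℤ}
    (ht : |t| < N₂) (h : ((N₁ * N₂ : ℕ) : ℤ) ∣ ((i : ℤ) - j) * N₂ + t) : i = j := by
  push_cast at h
  have ht0 : t = 0 := by
    refine Int.eq_zero_of_abs_lt_dvd ?_ ht
    exact (dvd_add_right (dvd_mul_left _ _)).1 ((dvd_mul_left _ _).trans h)
  rw [ht0, add_zero] at h
  have hN₂ : (N₂ : ℤ) ≠ 0 := by have := abs_nonneg t; omega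
  have hdvd : (N₁ : ℤ) ∣ (i : ℤ) - j := Int.dvd_of_mul_dvd_mul_right hN₂ h
  have := Int.eq_zero_of_abs_lt_dvd hdvd (by rw [abs_lt]; omega)
  omega

section Reshape

def reshape {K : Type*} {N : ℕ} (N₁ N₂ : ℕ) (B : Matrix (ZMod N) (ZMod N) K) :
    Matrix (Fin N₁ × Fin N₁) (Fin N₂ × Fin N₂) K :=
  of fun p q => B ((p.1 * N₂ + q.1 : ℕ) : ZMod N) ((p.2 * N₂ + q.2 : ℕ) : ZMod N)

theorem reshape_circulant_apply {K : Type*} {N N₁ N₂ : ℕ} (b : ZMod N → K) (i₁ j₁ : Fin N₁)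
    (i₂ j₂ : Fin N₂) :
    reshape N₁ N₂ (circulant b) (i₁, j₁) (i₂, j₂)
      = b (((i₁ * N₂ : ℕ) - (j₁ * N₂ + (N₂ - 1) : ℕ) : ZMod N) + (i₂ + (N₂ - 1) - j₂ : ℕ)) := by
  have hcast := congrArg (Nat.cast : ℕ → ZMod N)
    (show i₂ + (N₂ - 1) - j₂ + j₂ = i₂ + (N₂ - 1) by omega)
  push_cast at hcast
  rw [reshape, of_apply, circulant_apply]
  congr 1
  push_cast
  linear_combination -hcast

variable {K : Type*} [Field K]

theorem Matrix.rank_le_one_add_finrank_of_row {ι κ : Type*} [Fintype ι] [Fintype κ]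
    (B : Matrix ι κ K) (v : κ → K) (V : Submodule K (κ → K)) (hB : ∀ i, B i = v ∨ B i ∈ V) :
    B.rank ≤ 1 + finrank K V := by
  have hspan : Submodule.span K (Set.range B) ≤ (K ∙ v) ⊔ V := by
    rw [Submodule.span_le]
    rintro _ ⟨i, rfl⟩
    rcases hB i with hv | hV
    · rw [hv]
      exact Submodule.mem_sup_left (Submodule.mem_span_singleton_self v)
    · exact Submodule.mem_sup_right hV
  calc B.rank = finrank K (Submodule.span K (Set.range B)) := rank_eq_finrank_span_row B
    _ ≤ finrank K ↥((K ∙ v) ⊔ V) := Submodule.finrank_mono hspan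
    _ ≤ 1 + finrank K V := (Submodule.finrank_add_le_finrank_add_finrank _ _).trans
        (Nat.add_le_add_right ((finrank_span_le_card _).trans (by simp)) _)

theorem rank_reshape_circulant_le {N₁ N₂ N r o : ℕ} (hN : N₁ * N₂ = N) (hor : o ≤ r)
    {q : ℕ → K} (hq : q r ≠ 0) (b : ZMod N → K)
    (hb : ∀ d : ZMod N, d + o ≠ 0 → ∑ j ∈ range (r + 1), q j * b (d + j) = 0) :
    (reshape N₁ N₂ (circulant b)).rank ≤ r + 1 := by
  subst hN
  -- row `(i, j)` is `b` read on the window starting at `D i j`, at position `i₂ - j₂ + N₂ - 1`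
  let ψ : Fin N₂ × Fin N₂ → Fin (2 * N₂ - 1) := fun p => ⟨p.1 + (N₂ - 1) - p.2, by omega⟩
  let S := LinearMap.funLeft K K ψ ∘ₗ LinearMap.funLeft K K (Fin.val : Fin (2 * N₂ - 1) → ℕ)
  let w : ZMod (N₁ * N₂) → ℕ → K := fun D e => b (D + e)
  let D : ℕ → ℕ → ZMod (N₁ * N₂) := fun i j => (i * N₂ : ℕ) - (j * N₂ + (N₂ - 1) : ℕ)
  have hrow (i j : Fin N₁) : reshape N₁ N₂ (circulant b) (i, j) = S (w (D i j)) := by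
    ext ⟨i₂, j₂⟩
    exact reshape_circulant_apply b i j i₂ j₂
  have hmem (i j : Fin N₁) (hij : i ≠ j) : w (D i j) ∈ recurrenceSpace q r (2 * N₂ - 1) := by
    intro s hs
    have hN₂ : 1 ≤ N₂ := by omega
    have hne : D i j + s + o ≠ 0 := by
      intro h0
      have ht : |(s : ℤ) + o + 1 - N₂| < N₂ := by rw [abs_lt]; omega
      refine hij (Fin.ext (Int.eq_of_dvd_sub_mul_add i.isLt j.isLt ht ?_))
      rw [← ZMod.intCast_zmod_eq_zero_iff_dvd, ← h0]
      simp only [D]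
      push_cast [Nat.cast_sub hN₂]
      ring
    convert hb (D i j + s) hne using 3 with k
    simp only [w]
    push_cast
    ring_nf
  have hW : finrank K ((recurrenceSpace q r (2 * N₂ - 1)).map S) ≤ r := by
    rw [Submodule.map_comp]
    exact (Submodule.finrank_map_le _ _).trans (finrank_map_recurrenceSpace_le hq)
  refine (rank_le_one_add_finrank_of_row _ (S (w (D 0 0)))
    ((recurrenceSpace q r (2 * N₂ - 1)).map S) fun ⟨i, j⟩ => ?_).trans (by omega)
  rw [hrow]
  rcases eq_or_ne i j with rfl | hij
  · left
    congr 2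
    simp only [D]
    push_cast
    ring
  · exact .inr (Submodule.mem_map_of_mem (hmem i j hij))

end Reshape

theorem stmt8_general (L m n : ℕ) (hm : 2 ≤ m) (hN : m + n ≤ 2 ^ L)
    (a : ℤ → ℂ) (han : a (-(n : ℤ)) ≠ 0)
    (g : Polynomial ℂ)
    (hg : g = ∑ k ∈ Finset.range (m + n),
      Polynomial.C (a ((k : ℤ) - (n : ℤ))) * Polynomial.X ^ k)
    (hgU : ∀ u : ℂ, ‖u‖ = 1 → Polynomial.eval u g ≠ 0) :
    IsUnit (bandCirculant (2 ^ L) m n a) ∧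
      ∀ k : ℕ, 1 ≤ k → k ≤ L - 1 →
        ∀ Bhat : Matrix (Fin (2 ^ k) × Fin (2 ^ k)) (Fin (2 ^ (L - k)) × Fin (2 ^ (L - k))) ℂ,
          (∀ (i₁ j₁ : Fin (2 ^ k)) (i₂ j₂ : Fin (2 ^ (L - k))),
            Bhat (i₁, j₁) (i₂, j₂)
              = (bandCirculant (2 ^ L) m n a)⁻¹
                  ((((i₁ : ℕ) * 2 ^ (L - k) + (i₂ : ℕ) : ℕ) : ZMod (2 ^ L)))
                  ((((j₁ : ℕ) * 2 ^ (L - k) + (j₂ : ℕ) : ℕ) : ZMod (2 ^ L)))) →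
          Matrix.rank Bhat ≤ m + n := by
  subst hg
  have hA := isUnit_bandCirculant hN hgU
  refine ⟨hA, fun k _ hk Bhat hB => ?_⟩
  have hBhat : Bhat = reshape (2 ^ k) (2 ^ (L - k)) (bandCirculant (2 ^ L) m n a)⁻¹ := by
    ext ⟨i₁, j₁⟩ ⟨i₂, j₂⟩
    exact hB i₁ j₁ i₂ j₂
  have hsplit : 2 ^ k * 2 ^ (L - k) = 2 ^ L := by rw [← pow_add, Nat.add_sub_cancel' (by omega)]
  have hlead : a ((m : ℤ) - 1 - (m + n - 1 : ℕ)) ≠ 0 := by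
    rwa [show (m : ℤ) - 1 - (m + n - 1 : ℕ) = -n by omega]
  have hrank := rank_reshape_circulant_le hsplit (Nat.sub_le_sub_right (Nat.le_add_right m n) 1)
    (q := fun j => a ((m : ℤ) - 1 - j)) hlead (fun i => (bandCirculant (2 ^ L) m n a)⁻¹ i 0)
    fun d hd => by
      rw [Nat.sub_add_cancel (by omega)]
      exact bandCirculant_inv_recurrence (by omega) hN hA hd
  rw [hBhat, bandCirculant_eq_circulant, inv_circulant, ← bandCirculant_eq_circulant]
  omega

/-- If `g(z) = ∑_{k=-n}^{m-1} a_k z^{k+n}` has no zeros on the unit circle, the band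
circulant `A ∈ ℂ^{2^L × 2^L}` is invertible and the QTT ranks of `A⁻¹` (i.e. the ranks of
all its reshaped matrices) do not exceed `m + n`. -/
theorem stmt8 (L m n : ℕ) (hL : 2 ≤ L) (hm : 2 ≤ m) (hN : m + n ≤ 2 ^ L)
    (a : ℤ → ℂ) (ham : a ((m : ℤ) - 1) ≠ 0) (han : a (-(n : ℤ)) ≠ 0)
    (g : Polynomial ℂ)
    (hg : g = ∑ k ∈ Finset.range (m + n),
      Polynomial.C (a ((k : ℤ) - (n : ℤ))) * Polynomial.X ^ k)
    (hgU : ∀ u : ℂ, ‖u‖ = 1 → Polynomial.eval u g ≠ 0) :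
    IsUnit (bandCirculant (2 ^ L) m n a) ∧
      ∀ k : ℕ, 1 ≤ k → k ≤ L - 1 →
        ∀ Bhat : Matrix (Fin (2 ^ k) × Fin (2 ^ k)) (Fin (2 ^ (L - k)) × Fin (2 ^ (L - k))) ℂ,
          (∀ (i₁ j₁ : Fin (2 ^ k)) (i₂ j₂ : Fin (2 ^ (L - k))),
            Bhat (i₁, j₁) (i₂, j₂)
              = (bandCirculant (2 ^ L) m n a)⁻¹
                  ((((i₁ : ℕ) * 2 ^ (L - k) + (i₂ : ℕ) : ℕ) : ZMod (2 ^ L)))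
                  ((((j₁ : ℕ) * 2 ^ (L - k) + (j₂ : ℕ) : ℕ) : ZMod (2 ^ L)))) →
          Matrix.rank Bhat ≤ m + n :=
  stmt8_general L m n hm hN a han g hg hgU
end

section
/- Let N ≥ 3 and let A_M ∈ ℝ^{N×N} be the circulant circ(4, 1, 0, …, 0, 1), i.e., (A_M)_{i,j} = 4 if (i−j) mod N = 0, (A_M)_{i,j} = 1 if (i−j) mod N ∈ {1, N−1}, and (A_M)_{i,j} = 0 otherwise. Then A_M is invertible and for all 0 ≤ i, j ≤ N−1, with d = (i−j) mod N: (A_M^{−1})_{i,j} = ((√3 − 2)^{N−d} + (√3 − 2)^{d}) / (2√3 · (1 − (√3 − 2)^N)). -/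
/-- Explicit inverse of the mass matrix `A_M = circ(4, 1, 0, …, 0, 1) ∈ ℝ^{N×N}`:
`A_M` is invertible and `(A_M⁻¹)_{i,j} = ((√3-2)^{N-d} + (√3-2)^d) / (2√3 (1-(√3-2)^N))`
where `d = (i - j) mod N`. -/
theorem stmt12 (N : ℕ) [NeZero N] (hN : 3 ≤ N)
    (A : Matrix (ZMod N) (ZMod N) ℝ)
    (hA : ∀ i j : ZMod N, A i j =
      if (i - j).val = 0 then 4
      else if (i - j).val = 1 ∨ (i - j).val = N - 1 then 1
      else 0) :
    IsUnit A ∧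
      ∀ i j : ZMod N, A⁻¹ i j =
        ((Real.sqrt 3 - 2) ^ (N - (i - j).val) + (Real.sqrt 3 - 2) ^ ((i - j).val))
          / (2 * Real.sqrt 3 * (1 - (Real.sqrt 3 - 2) ^ N)) := by
  set q : ℝ := Real.sqrt 3 - 2 with hq_def
  have h3 : Real.sqrt 3 ^ 2 = 3 := Real.sq_sqrt (by norm_num)
  have hs3 : Real.sqrt 3 = q + 2 := by rw [hq_def]; ring
  have hq2 : q ^ 2 = -4 * q - 1 := by
    have h : (q + 2) ^ 2 = 3 := by rw [← hs3]; exact h3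
    nlinarith [h]
  have hs3lb : (1:ℝ) < Real.sqrt 3 := by nlinarith [Real.sqrt_nonneg 3]
  have hs3ub : Real.sqrt 3 < 2 := by nlinarith [Real.sqrt_nonneg 3]
  have habs : |q| < 1 := abs_lt.mpr ⟨by rw [hq_def]; linarith, by rw [hq_def]; linarith⟩
  have hpow : |q ^ N| < 1 := by
    rw [abs_pow]
    exact pow_lt_one₀ (abs_nonneg q) habs (by omega)
  have hDpos : (0:ℝ) < 2 * Real.sqrt 3 * (1 - q ^ N) := by
    have h1 := (abs_lt.mp hpow).2
    nlinarith
  set D : ℝ := 2 * Real.sqrt 3 * (1 - q ^ N) with hD_def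
  have hD : D ≠ 0 := ne_of_gt hDpos
  set g : ZMod N → ℝ := fun d => q ^ (N - d.val) + q ^ d.val with hg_def
  set B : Matrix (ZMod N) (ZMod N) ℝ := Matrix.of (fun i j => g (i - j) / D) with hB_def
  -- basic val facts
  have hv1 : (1 : ZMod N).val = 1 := by
    have : ((1:ℕ) : ZMod N).val = 1 := ZMod.val_cast_of_lt (by omega)
    simpa using this
  have hcast : ∀ m : ℕ, m ≤ N → ((N - m : ℕ) : ZMod N) = -(m : ZMod N) := by
    intro m hm
    push_cast [Nat.cast_sub hm]
    simp [ZMod.natCast_self]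
  have hvm1 : (-1 : ZMod N).val = N - 1 := by
    have h' : (-1 : ZMod N) = ((N - 1 : ℕ) : ZMod N) := by
      rw [hcast 1 (by omega)]; push_cast; ring
    rw [h']
    exact ZMod.val_cast_of_lt (by omega)
  have h1ne : (1 : ZMod N) ≠ 0 := by
    intro h
    rw [h] at hv1
    simp at hv1
  have h2ne : (2 : ZMod N) ≠ 0 := by
    intro h
    have h2v : ((2:ℕ) : ZMod N).val = 2 := ZMod.val_cast_of_lt (by omega)
    rw [show ((2:ℕ) : ZMod N) = (2 : ZMod N) by push_cast; ring, h] at h2v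
    simp at h2v
  -- key recurrence
  have key : ∀ d : ZMod N, 4 * g d + g (d - 1) + g (d + 1) = if d = 0 then D else 0 := by
    intro d
    have hvlt : d.val < N := ZMod.val_lt d
    rcases Nat.lt_or_ge d.val 1 with h0 | h1
    · -- d = 0
      have hd0 : d = 0 := (ZMod.val_eq_zero d).mp (by omega)
      subst hd0
      rw [if_pos rfl, zero_sub, zero_add]
      obtain ⟨k, hk⟩ : ∃ k, N = k + 2 := ⟨N - 2, by omega⟩
      simp only [hg_def, ZMod.val_zero, hv1, hvm1]
      rw [show N - 0 = k + 2 by omega, show N - (N - 1) = 1 by omega,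
        show N - 1 = k + 1 by omega, hD_def, hs3, hk]
      linear_combination (2 * q ^ (k + 1)) * hq2
    rcases Nat.lt_or_ge d.val (N - 1) with h2 | h2
    · -- middle case: 1 ≤ d.val ≤ N - 2
      have hdne : d ≠ 0 := by
        intro h; rw [h] at h1; simp [ZMod.val_zero] at h1
      rw [if_neg hdne]
      have e1 : (d + 1).val = d.val + 1 := by
        rw [ZMod.val_add, hv1]
        exact Nat.mod_eq_of_lt (by omega)
      have e2 : (d - 1).val = d.val - 1 := by
        have h' : d - 1 = d + (-1) := by ring
        rw [h', ZMod.val_add, hvm1]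
        have h'' : d.val + (N - 1) = (d.val - 1) + N := by omega
        rw [h'', Nat.add_mod_right]
        exact Nat.mod_eq_of_lt (by omega)
      obtain ⟨w, hw⟩ : ∃ w, d.val = w + 1 := ⟨d.val - 1, by omega⟩
      obtain ⟨m, hm⟩ : ∃ m, N - d.val = m + 1 := ⟨N - d.val - 1, by omega⟩
      simp only [hg_def, e1, e2]
      rw [show N - (d.val + 1) = m by omega, show d.val + 1 = w + 2 by omega,
        show N - (d.val - 1) = m + 2 by omega, show d.val - 1 = w by omega,
        show N - d.val = m + 1 by omega, hw]
      linear_combination (q ^ m + q ^ w) * hq2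
    · -- d = -1
      have hdv : d.val = N - 1 := by omega
      have hd : d = -1 := ZMod.val_injective N (by rw [hdv, hvm1])
      subst hd
      have hdne : (-1 : ZMod N) ≠ 0 := by
        intro h; rw [h] at hvm1; simp [ZMod.val_zero] at hvm1; omega
      rw [if_neg hdne]
      have e1 : (-1 - 1 : ZMod N).val = N - 2 := by
        have h' : (-1 - 1 : ZMod N) = ((N - 2 : ℕ) : ZMod N) := by
          rw [hcast 2 (by omega)]; push_cast; ring
        rw [h']
        exact ZMod.val_cast_of_lt (by omega)
      have e2 : (-1 + 1 : ZMod N) = 0 := by ring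
      obtain ⟨k, hk⟩ : ∃ k, N = k + 3 := ⟨N - 3, by omega⟩
      simp only [hg_def, hvm1, e1, e2, ZMod.val_zero]
      rw [show N - (N - 1) = 1 by omega, show N - (N - 2) = 2 by omega,
        show N - 1 = k + 2 by omega, show N - 2 = k + 1 by omega,
        show N - 0 = k + 3 by omega]
      linear_combination (1 + q ^ (k + 1)) * hq2
  -- A * B = 1
  have hmul : A * B = 1 := by
    ext i j
    rw [Matrix.mul_apply]
    have hrw : ∀ k : ZMod N, A i k * B k j =
        (if k = i then (4:ℝ) * B i j else 0) +
        ((if k = i - 1 then B (i - 1) j else 0) + (if k = i + 1 then B (i + 1) j else 0)) := by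
      intro k
      rw [hA]
      rcases eq_or_ne k i with rfl | hki
      · have c1 : k ≠ k - 1 := fun h => h1ne (by linear_combination h)
        have c2 : k ≠ k + 1 := fun h => h1ne (by linear_combination -h)
        rw [sub_self, ZMod.val_zero, if_pos rfl]
        simp [c1, c2]
      · rcases eq_or_ne k (i - 1) with rfl | hk1
        · rw [show i - (i - 1) = 1 by ring, hv1]
          have c3 : ¬((i - 1 : ZMod N) = i) := fun h => h1ne (by linear_combination -h)
          have c4 : ¬((i - 1 : ZMod N) = i + 1) := fun h => h2ne (by linear_combination -h)
          rw [if_neg (by omega), if_pos (Or.inl rfl), one_mul]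
          simp [c3, c4]
        · rcases eq_or_ne k (i + 1) with rfl | hk2
          · rw [show i - (i + 1) = -1 by ring, hvm1]
            have d1 : ¬((i + 1 : ZMod N) = i) := fun h => h1ne (by linear_combination h)
            have d2 : ¬((i + 1 : ZMod N) = i - 1) := fun h => h2ne (by linear_combination h)
            rw [if_neg (by omega), if_pos (Or.inr rfl), one_mul]
            simp [d1, d2]
          · have hvne0 : (i - k).val ≠ 0 := by
              intro h
              exact hki (sub_eq_zero.mp ((ZMod.val_eq_zero _).mp h)).symm
            have hv1' : (i - k).val ≠ 1 := by
              intro h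
              have h' : i - k = 1 := ZMod.val_injective N (by rw [h, hv1])
              exact hk1 (by linear_combination -h')
            have hvN1 : (i - k).val ≠ N - 1 := by
              intro h
              have h' : i - k = -1 := ZMod.val_injective N (by rw [h, hvm1])
              exact hk2 (by linear_combination -h')
            rw [if_neg hvne0, if_neg (by tauto), zero_mul]
            simp [hki, hk1, hk2]
    rw [Finset.sum_congr rfl (fun k _ => hrw k)]
    rw [Finset.sum_add_distrib, Finset.sum_add_distrib, Finset.sum_ite_eq',
      Finset.sum_ite_eq', Finset.sum_ite_eq']
    simp only [Finset.mem_univ, if_true]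
    have hB1 : B i j = g (i - j) / D := rfl
    have hB2 : B (i - 1) j = g (i - j - 1) / D := by
      show g (i - 1 - j) / D = g (i - j - 1) / D
      rw [show i - 1 - j = i - j - 1 by ring]
    have hB3 : B (i + 1) j = g (i - j + 1) / D := by
      show g (i + 1 - j) / D = g (i - j + 1) / D
      rw [show i + 1 - j = i - j + 1 by ring]
    rw [hB1, hB2, hB3]
    have hcomb : 4 * (g (i - j) / D) + (g (i - j - 1) / D + g (i - j + 1) / D)
        = (4 * g (i - j) + g (i - j - 1) + g (i - j + 1)) / D := by ring
    rw [hcomb, key]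
    rcases eq_or_ne i j with rfl | hij
    · rw [if_pos (sub_self i), Matrix.one_apply_eq, div_self hD]
    · rw [if_neg (fun h => hij (by linear_combination sub_eq_zero.mp h)),
        Matrix.one_apply_ne hij, zero_div]
  refine ⟨⟨⟨A, B, hmul, mul_eq_one_comm.mp hmul⟩, rfl⟩, ?_⟩
  intro i j
  rw [Matrix.inv_eq_right_inv hmul, hB_def]
  simp only [Matrix.of_apply, hg_def]
end

section
/- Let N ≥ 3, let 𝔰 > 0 be a real number, and let A = A_S + 𝔰I ∈ ℝ^{N×N} be the circulant circ(2+𝔰, −1, 0, …, 0, −1), i.e., A_{i,j} = 2+𝔰 if (i−j) mod N = 0, A_{i,j} = −1 if (i−j) mod N ∈ {1, N−1}, and A_{i,j} = 0 otherwise. Set z_1 = 1 + 𝔰/2 − √(𝔰²/4 + 𝔰). Then 0 < z_1 < 1, A is invertible, and for all 0 ≤ i, j ≤ N−1, with d = (i−j) mod N: (A^{−1})_{i,j} = (z_1^{N−d} + z_1^{d}) / (√(𝔰² + 4𝔰) · (1 − z_1^N)). -/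
/-- Explicit inverse of the shifted stiffness matrix
`A = A_S + 𝔰 I = circ(2+𝔰, -1, 0, …, 0, -1) ∈ ℝ^{N×N}` for `𝔰 > 0`: with
`z₁ = 1 + 𝔰/2 - √(𝔰²/4 + 𝔰)` one has `0 < z₁ < 1`, `A` is invertible, and
`(A⁻¹)_{i,j} = (z₁^{N-d} + z₁^d) / (√(𝔰² + 4𝔰) (1 - z₁^N))` where `d = (i-j) mod N`. -/
theorem stmt13 (N : ℕ) [NeZero N] (hN : 3 ≤ N) (𝔰 : ℝ) (h𝔰 : 0 < 𝔰)
    (A : Matrix (ZMod N) (ZMod N) ℝ)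
    (hA : ∀ i j : ZMod N, A i j =
      if (i - j).val = 0 then 2 + 𝔰
      else if (i - j).val = 1 ∨ (i - j).val = N - 1 then -1
      else 0)
    (z₁ : ℝ) (hz₁ : z₁ = 1 + 𝔰 / 2 - Real.sqrt (𝔰 ^ 2 / 4 + 𝔰)) :
    (0 < z₁ ∧ z₁ < 1) ∧ IsUnit A ∧
      ∀ i j : ZMod N, A⁻¹ i j =
        (z₁ ^ (N - (i - j).val) + z₁ ^ ((i - j).val))
          / (Real.sqrt (𝔰 ^ 2 + 4 * 𝔰) * (1 - z₁ ^ N)) := by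
  have hs_nonneg : (0:ℝ) ≤ 𝔰 ^ 2 / 4 + 𝔰 := by positivity
  set s := Real.sqrt (𝔰 ^ 2 / 4 + 𝔰) with hs_def
  have hs_sq : s ^ 2 = 𝔰 ^ 2 / 4 + 𝔰 := Real.sq_sqrt hs_nonneg
  have hs_pos : 0 < s := Real.sqrt_pos.2 (by positivity)
  have hquad : z₁ ^ 2 + 1 = (2 + 𝔰) * z₁ := by rw [hz₁]; nlinarith [hs_sq]
  have hsz : s = 1 + 𝔰 / 2 - z₁ := by rw [hz₁]; ring
  have hz₁_pos : 0 < z₁ := by rw [hz₁]; nlinarith [hs_sq, hs_pos]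
  have hz₁_lt : z₁ < 1 := by rw [hz₁]; nlinarith [hs_sq, hs_pos]
  have h2s : Real.sqrt (𝔰 ^ 2 + 4 * 𝔰) = 2 * s := by
    rw [show 𝔰 ^ 2 + 4 * 𝔰 = (2 * s) ^ 2 by nlinarith [hs_sq], Real.sqrt_sq (by positivity)]
  have hzN : z₁ ^ N < 1 := pow_lt_one₀ hz₁_pos.le hz₁_lt (by omega)
  have hc : (2 * s * (1 - z₁ ^ N)) ≠ 0 := ne_of_gt (mul_pos (by positivity) (by linarith))
  -- ZMod helpers
  have hnc : ∀ x : ZMod N, ((x.val : ℕ) : ZMod N) = x := fun x => ZMod.natCast_rightInverse x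
  have hvlt : ∀ x : ZMod N, x.val < N := fun x => ZMod.val_lt x
  have hone : (1 : ZMod N).val = 1 := by
    have : ((1:ℕ) : ZMod N) = 1 := by push_cast; ring
    rw [← this, ZMod.val_cast_of_lt (by omega)]
  have htwo : (2 : ZMod N).val = 2 := by
    have : ((2:ℕ) : ZMod N) = 2 := by push_cast; ring
    rw [← this, ZMod.val_cast_of_lt (by omega)]
  have hneg1 : (-1 : ZMod N).val = N - 1 := by
    have h1 : ((N - 1 : ℕ) : ZMod N) = -1 := by
      push_cast [Nat.cast_sub (by omega : 1 ≤ N)]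
      simp [ZMod.natCast_self]
    rw [← h1, ZMod.val_cast_of_lt (by omega)]
  have hval_eq : ∀ x y : ZMod N, x.val = y.val → x = y := by
    intro x y h; rw [← hnc x, ← hnc y, h]
  -- the inverse candidate
  set c : ℝ := 2 * s * (1 - z₁ ^ N) with hc_def
  set B : Matrix (ZMod N) (ZMod N) ℝ :=
    fun i j => (z₁ ^ (N - (i - j).val) + z₁ ^ ((i - j).val)) / c with hB_def
  -- key sum lemma
  have key : ∀ i j : ZMod N, (A * B) i j = (2 + 𝔰) * B i j - B (i - 1) j - B (i + 1) j := by
    intro i j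
    rw [Matrix.mul_apply]
    have hpt : ∀ k : ZMod N, A i k * B k j =
        (if i = k then (2 + 𝔰) * B k j else 0) +
        (if i - 1 = k then -B k j else 0) + (if i + 1 = k then -B k j else 0) := by
      intro k
      have h10 : (1 : ZMod N) ≠ 0 := by
        intro h; have := hone; rw [h, ZMod.val_zero] at this; omega
      have h20 : (2 : ZMod N) ≠ 0 := by
        intro h; have := htwo; rw [h, ZMod.val_zero] at this; omega
      rw [hA]
      by_cases hik : i = k
      · subst hik
        have e1 : ¬ (i - 1 = i) := by intro h; apply h10; linear_combination -h
        have e2 : ¬ (i + 1 = i) := by intro h; apply h10; linear_combination h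
        simp [e1, e2, ZMod.val_zero]
      · have h0 : (i - k).val ≠ 0 := by
          intro h
          apply hik
          have : i - k = 0 := by rw [← hnc (i - k), h]; simp
          linear_combination this
        by_cases h1 : i - 1 = k
        · have hik1 : i - k = 1 := by linear_combination h1
          have hv : (i - k).val = 1 := by rw [hik1, hone]
          have e2 : ¬ (i + 1 = k) := by
            intro h; apply h20; linear_combination h - h1
          simp [h0, hv, hik, h1, e2]
        · by_cases h2 : i + 1 = k
          · have hik1 : i - k = -1 := by linear_combination h2
            have hv : (i - k).val = N - 1 := by rw [hik1, hneg1]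
            have hv1 : (i - k).val ≠ 1 := by rw [hv]; omega
            simp [h0, hv, hv1, hik, h1, h2]
            intro h; exact absurd h (by omega)
          · have hv1 : (i - k).val ≠ 1 := by
              intro h; apply h1
              have : i - k = 1 := by rw [← hnc (i - k), h]; push_cast; ring
              linear_combination this
            have hvN : (i - k).val ≠ N - 1 := by
              intro h; apply h2
              have : i - k = -1 := by rw [← hnc (i - k), h, ← hneg1, hnc]
              linear_combination this
            simp [h0, hv1, hvN, hik, h1, h2]
    rw [Finset.sum_congr rfl (fun k _ => hpt k)]
    rw [Finset.sum_add_distrib, Finset.sum_add_distrib, Finset.sum_ite_eq, Finset.sum_ite_eq,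
      Finset.sum_ite_eq]
    simp
    ring
  have expand : ∀ aa bb dd : ℝ, (2 + 𝔰) * (aa / c) - bb / c - dd / c =
      ((2 + 𝔰) * aa - bb - dd) / c := by intro aa bb dd; ring
  have hABone : A * B = 1 := by
    ext i j
    rw [key, Matrix.one_apply]
    simp only [hB_def]
    rw [sub_right_comm i 1 j, show i + 1 - j = i - j + 1 from by ring]
    set x := i - j with hx_def
    by_cases hx0 : x = 0
    · have hij : i = j := by rw [hx_def] at hx0; exact sub_eq_zero.mp hx0
      have hd : x.val = 0 := by rw [hx0, ZMod.val_zero]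
      have hm : (x - 1).val = N - 1 := by rw [hx0, zero_sub, hneg1]
      have hp : (x + 1).val = 1 := by rw [hx0, zero_add, hone]
      rw [if_pos hij, hd, hm, hp, expand]
      rw [div_eq_iff hc, one_mul, Nat.sub_zero, pow_zero, pow_one,
        show N - (N - 1) = 1 by omega, pow_one]
      rw [hc_def, hsz, show z₁ ^ N = z₁ ^ (N - 1) * z₁ from by
        rw [← pow_succ]; congr 1; omega]
      linear_combination (-2 * z₁ ^ (N - 1)) * hquad
    · have hij : ¬ (i = j) := by
        intro h; apply hx0; rw [hx_def, h, sub_self]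
      have hd1 : 1 ≤ x.val := by
        rcases Nat.eq_zero_or_pos x.val with h | h
        · exact absurd (by rw [← hnc x, h]; simp : x = 0) hx0
        · exact h
      have hdlt : x.val < N := hvlt x
      have hxm : (x - 1).val = x.val - 1 := by
        have h1 : ((x.val - 1 : ℕ) : ZMod N) = x - 1 := by
          rw [Nat.cast_sub hd1, Nat.cast_one, hnc]
        rw [← h1, ZMod.val_cast_of_lt (by omega)]
      rw [if_neg hij, hxm]
      by_cases hdN : x.val = N - 1
      · have hxp : (x + 1).val = 0 := by
          have h1 : ((x.val + 1 : ℕ) : ZMod N) = x + 1 := by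
            rw [Nat.cast_add, Nat.cast_one, hnc]
          have h2 : x.val + 1 = N := by omega
          rw [show x + 1 = 0 from by rw [← h1, h2, ZMod.natCast_self], ZMod.val_zero]
        rw [hxp, hdN, expand, div_eq_zero_iff]
        left
        rw [show N - (N - 1) = 1 by omega, show N - 1 - 1 = N - 2 by omega,
          show N - (N - 2) = 2 by omega, Nat.sub_zero, pow_zero, pow_one,
          show z₁ ^ (N - 1) = z₁ ^ (N - 2) * z₁ from by rw [← pow_succ]; congr 1; omega,
          show z₁ ^ N = z₁ ^ (N - 2) * z₁ ^ 2 from by rw [← pow_add]; congr 1; omega]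
        linear_combination (-(1 + z₁ ^ (N - 2))) * hquad
      · have hxp : (x + 1).val = x.val + 1 := by
          have h1 : ((x.val + 1 : ℕ) : ZMod N) = x + 1 := by
            rw [Nat.cast_add, Nat.cast_one, hnc]
          rw [← h1, ZMod.val_cast_of_lt (by omega)]
        rw [hxp, expand, div_eq_zero_iff]
        left
        rw [show N - (x.val - 1) = N - x.val + 1 by omega,
          show N - (x.val + 1) = N - x.val - 1 by omega,
          show z₁ ^ (x.val + 1) = z₁ ^ (x.val - 1) * z₁ ^ 2 from by
            rw [← pow_add]; congr 1; omega,
          show z₁ ^ (N - x.val + 1) = z₁ ^ (N - x.val - 1) * z₁ ^ 2 from by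
            rw [← pow_add]; congr 1; omega,
          show z₁ ^ x.val = z₁ ^ (x.val - 1) * z₁ from by rw [← pow_succ]; congr 1; omega,
          show z₁ ^ (N - x.val) = z₁ ^ (N - x.val - 1) * z₁ from by
            rw [← pow_succ]; congr 1; omega]
        linear_combination (-(z₁ ^ (x.val - 1) + z₁ ^ (N - x.val - 1))) * hquad
  have hBAone : B * A = 1 := mul_eq_one_comm.mp hABone
  have hUnit : IsUnit A := ⟨⟨A, B, hABone, hBAone⟩, rfl⟩
  have hinv : A⁻¹ = B := Matrix.inv_eq_right_inv hABone
  refine ⟨⟨hz₁_pos, hz₁_lt⟩, hUnit, fun i j => ?_⟩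
  rw [hinv, h2s, ← hc_def]
end

section
/- Let N ≥ 3 and let A_S ∈ ℝ^{N×N} be the circulant circ(2, −1, 0, …, 0, −1), i.e., (A_S)_{i,j} = 2 if (i−j) mod N = 0, (A_S)_{i,j} = −1 if (i−j) mod N ∈ {1, N−1}, and (A_S)_{i,j} = 0 otherwise. Let B ∈ ℝ^{N×N} be the circulant with entries B_{i,j} = f((i−j) mod N), where f(d) = (6d² − 6Nd + N² − 1)/(12N). Then B is the Moore–Penrose pseudoinverse of A_S; that is, A_S B A_S = A_S, B A_S B = B, (A_S B)ᵀ = A_S B, and (B A_S)ᵀ = B A_S. -/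
open Matrix Finset

private lemma sum_range_id_real (n : ℕ) : ∑ d ∈ Finset.range n, (d : ℝ) = n * (n - 1) / 2 := by
  induction n with
  | zero => simp
  | succ n ih => rw [Finset.sum_range_succ, ih]; push_cast; ring

private lemma sum_range_sq_real (n : ℕ) :
    ∑ d ∈ Finset.range n, (d : ℝ) ^ 2 = n * (n - 1) * (2 * n - 1) / 6 := by
  induction n with
  | zero => simp
  | succ n ih => rw [Finset.sum_range_succ, ih]; push_cast; ring

private lemma gsum_aux (N n : ℕ) :
    ∑ d ∈ Finset.range n, (6 * (d : ℝ) ^ 2 - 6 * (N : ℝ) * d + (N : ℝ) ^ 2 - 1)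
      = 2 * (n : ℝ) ^ 3 - 3 * n ^ 2 + n - 3 * N * n ^ 2 + 3 * N * n + n * N ^ 2 - n := by
  induction n with
  | zero => simp
  | succ n ih => rw [Finset.sum_range_succ, ih]; push_cast; ring

private lemma gsum (N : ℕ) (hN : 3 ≤ N) :
    ∑ d ∈ Finset.range N, (6 * (d : ℝ) ^ 2 - 6 * (N : ℝ) * d + (N : ℝ) ^ 2 - 1) / (12 * N) = 0 := by
  rw [← Finset.sum_div, gsum_aux]
  have h : 2 * (N : ℝ) ^ 3 - 3 * N ^ 2 + N - 3 * N * N ^ 2 + 3 * N * N + N * N ^ 2 - N = 0 := by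
    ring
  rw [h, zero_div]

private lemma key (N : ℕ) (hN : 3 ≤ N) (d : ℕ) (hd : d < N) :
    2 * ((6 * (d : ℝ) ^ 2 - 6 * N * d + N ^ 2 - 1) / (12 * N))
      - (6 * (((d + (N - 1)) % N : ℕ) : ℝ) ^ 2 - 6 * N * (((d + (N - 1)) % N : ℕ) : ℝ) + N ^ 2 - 1)
          / (12 * N)
      - (6 * (((d + 1) % N : ℕ) : ℝ) ^ 2 - 6 * N * (((d + 1) % N : ℕ) : ℝ) + N ^ 2 - 1) / (12 * N)
    = (if d = 0 then 1 else 0) - 1 / N := by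
  have hN0 : (N : ℝ) ≠ 0 := Nat.cast_ne_zero.mpr (by omega)
  by_cases hd0 : d = 0
  · subst hd0
    have e1 : (0 + (N - 1)) % N = N - 1 := by
      rw [Nat.zero_add, Nat.mod_eq_of_lt (by omega)]
    have e2 : (0 + 1) % N = 1 := Nat.mod_eq_of_lt (by omega)
    rw [e1, e2, if_pos rfl]
    push_cast [Nat.cast_sub (show 1 ≤ N by omega)]
    field_simp
    ring
  · by_cases hd1 : d = N - 1
    · subst hd1
      have e1 : (N - 1 + (N - 1)) % N = N - 2 := by
        have h : N - 1 + (N - 1) = N + (N - 2) := by omega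
        rw [h, Nat.add_mod_left, Nat.mod_eq_of_lt (by omega)]
      have e2 : (N - 1 + 1) % N = 0 := by
        have h : N - 1 + 1 = N := by omega
        rw [h, Nat.mod_self]
      rw [e1, e2, if_neg hd0]
      push_cast [Nat.cast_sub (show 1 ≤ N by omega), Nat.cast_sub (show 2 ≤ N by omega)]
      field_simp
      ring
    · have e1 : (d + (N - 1)) % N = d - 1 := by
        have h : d + (N - 1) = N + (d - 1) := by omega
        rw [h, Nat.add_mod_left, Nat.mod_eq_of_lt (by omega)]
      have e2 : (d + 1) % N = d + 1 := Nat.mod_eq_of_lt (by omega)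
      rw [e1, e2, if_neg hd0]
      push_cast [Nat.cast_sub (show 1 ≤ d by omega)]
      field_simp
      ring

/-- The circulant `B` with entries `B_{i,j} = f((i-j) mod N)`, where
`f(d) = (6d² - 6Nd + N² - 1)/(12N)`, is the Moore–Penrose pseudoinverse of the stiffness
circulant `A_S = circ(2, -1, 0, …, 0, -1) ∈ ℝ^{N×N}`: the four Penrose conditions hold. -/
theorem stmt14 (N : ℕ) [NeZero N] (hN : 3 ≤ N)
    (A : Matrix (ZMod N) (ZMod N) ℝ)
    (hA : ∀ i j : ZMod N, A i j =
      if (i - j).val = 0 then 2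
      else if (i - j).val = 1 ∨ (i - j).val = N - 1 then -1
      else 0)
    (B : Matrix (ZMod N) (ZMod N) ℝ)
    (hB : ∀ i j : ZMod N, B i j =
      (6 * ((i - j).val : ℝ) ^ 2 - 6 * N * ((i - j).val : ℝ) + N ^ 2 - 1) / (12 * N)) :
    A * B * A = A ∧ B * A * B = B ∧ (A * B)ᵀ = A * B ∧ (B * A)ᵀ = B * A := by
  haveI : Fact (1 < N) := ⟨by omega⟩
  have hN0 : (N : ℝ) ≠ 0 := Nat.cast_ne_zero.mpr (by omega)
  -- basic ZMod facts
  have hval1 : (1 : ZMod N).val = 1 := ZMod.val_one N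
  have hnegone : ((-1 : ZMod N)) = ((N - 1 : ℕ) : ZMod N) := by
    rw [Nat.cast_sub (show 1 ≤ N by omega), ZMod.natCast_self, Nat.cast_one]
    ring
  have hvalneg : ((-1 : ZMod N)).val = N - 1 := by
    rw [hnegone, ZMod.val_cast_of_lt (by omega)]
  have hcast : ∀ x : ZMod N, ((x.val : ℕ) : ZMod N) = x := fun x => ZMod.natCast_rightInverse x
  have hv1 : ∀ x : ZMod N, x.val = 1 → x = 1 := by
    intro x h
    have := hcast x
    rw [h] at this
    simpa using this.symm
  have hvN1 : ∀ x : ZMod N, x.val = N - 1 → x = -1 := by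
    intro x h
    have := hcast x
    rw [h] at this
    rw [← this, hnegone]
  -- distinctness
  have d2val : ((2 : ZMod N)).val = 2 := by
    have : (2 : ZMod N) = ((2 : ℕ) : ZMod N) := by push_cast; ring
    rw [this, ZMod.val_cast_of_lt (by omega)]
  have dist1 : ∀ i : ZMod N, i ≠ i - 1 := by
    intro i h
    have h1 : (1 : ZMod N) = 0 := by linear_combination h
    exact one_ne_zero h1
  have dist2 : ∀ i : ZMod N, i ≠ i + 1 := by
    intro i h
    have h1 : (1 : ZMod N) = 0 := by linear_combination -h
    exact one_ne_zero h1
  have dist3 : ∀ i : ZMod N, i - 1 ≠ i + 1 := by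
    intro i h
    have h1 : (2 : ZMod N) = 0 := by linear_combination -h
    have := congrArg ZMod.val h1
    rw [d2val, ZMod.val_zero] at this
    omega
  -- decomposition of A along rows : A i k
  have hdecRow : ∀ i k : ZMod N, A i k =
      (if k = i then 2 else 0) + (if k = i - 1 then -1 else 0)
        + (if k = i + 1 then -1 else 0) := by
    intro i k
    rw [hA]
    by_cases h1 : k = i
    · subst h1
      rw [if_pos rfl, if_neg (dist1 k), if_neg (dist2 k)]
      simp
    · by_cases h2 : k = i - 1
      · subst h2
        have hv : (i - (i - 1)).val = 1 := by
          have h : i - (i - 1) = 1 := by ring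
          rw [h, hval1]
        rw [hv, if_neg (by omega), if_pos (Or.inl rfl), if_pos rfl,
          if_neg (fun h => (dist1 i) h.symm), if_neg (dist3 i)]
        ring
      · by_cases h3 : k = i + 1
        · subst h3
          have hv : (i - (i + 1)).val = N - 1 := by
            have h : i - (i + 1) = -1 := by ring
            rw [h, hvalneg]
          rw [hv, if_neg (by omega), if_pos (Or.inr rfl),
            if_neg (fun h => (dist2 i) h.symm), if_neg fun h => (dist3 i) h.symm, if_pos rfl]
          ring
        · have hv0 : (i - k).val ≠ 0 := by
            intro h
            rw [ZMod.val_eq_zero, sub_eq_zero] at h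
            exact h1 h.symm
          have hv1' : (i - k).val ≠ 1 := by
            intro h
            have := hv1 _ h
            exact h2 (by linear_combination -this)
          have hvN1' : (i - k).val ≠ N - 1 := by
            intro h
            have := hvN1 _ h
            exact h3 (by linear_combination -this)
          rw [if_neg hv0, if_neg (by tauto), if_neg h1, if_neg h2, if_neg h3]
          ring
  -- decomposition of A along columns : A k j
  have hdecCol : ∀ k j : ZMod N, A k j =
      (if k = j then 2 else 0) + (if k = j + 1 then -1 else 0)
        + (if k = j - 1 then -1 else 0) := by
    intro k j
    rw [hA]
    by_cases h1 : k = j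
    · subst h1
      rw [if_pos rfl, if_neg (dist2 k), if_neg (dist1 k)]
      simp
    · by_cases h2 : k = j + 1
      · subst h2
        have hv : (j + 1 - j).val = 1 := by
          have h : j + 1 - j = 1 := by ring
          rw [h, hval1]
        rw [hv, if_neg (by omega), if_pos (Or.inl rfl), if_neg (fun h => (dist2 j) h.symm),
          if_pos rfl, if_neg fun h => (dist3 j) h.symm]
        ring
      · by_cases h3 : k = j - 1
        · subst h3
          have hv : (j - 1 - j).val = N - 1 := by
            have h : j - 1 - j = -1 := by ring
            rw [h, hvalneg]
          rw [hv, if_neg (by omega), if_pos (Or.inr rfl), if_neg (fun h => (dist1 j) h.symm),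
            if_neg (dist3 j), if_pos rfl]
          ring
        · have hv0 : (k - j).val ≠ 0 := by
            intro h
            rw [ZMod.val_eq_zero, sub_eq_zero] at h
            exact h1 h
          have hv1' : (k - j).val ≠ 1 := by
            intro h
            have := hv1 _ h
            exact h2 (by linear_combination this)
          have hvN1' : (k - j).val ≠ N - 1 := by
            intro h
            have := hvN1 _ h
            exact h3 (by linear_combination this)
          rw [if_neg hv0, if_neg (by tauto), if_neg h1, if_neg h2, if_neg h3]
          ring
  -- column sums of A vanish
  have colA : ∀ j : ZMod N, ∑ k : ZMod N, A k j = 0 := by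
    intro j
    have : ∑ k : ZMod N, A k j =
        ∑ k : ZMod N, ((if k = j then (2:ℝ) else 0) + (if k = j + 1 then -1 else 0)
          + (if k = j - 1 then -1 else 0)) :=
      Finset.sum_congr rfl fun k _ => hdecCol k j
    rw [this, Finset.sum_add_distrib, Finset.sum_add_distrib]
    simp only [Finset.sum_ite_eq', Finset.mem_univ, if_true]
    ring
  -- column sums of B vanish
  have colB : ∀ j : ZMod N, ∑ k : ZMod N, B k j = 0 := by
    intro j
    have h1 : ∑ k : ZMod N, B k j
        = ∑ k : ZMod N,
            (6 * ((k : ZMod N).val : ℝ) ^ 2 - 6 * N * ((k : ZMod N).val : ℝ) + N ^ 2 - 1)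
              / (12 * N) := by
      rw [Finset.sum_congr rfl fun k _ => hB k j]
      exact Fintype.sum_equiv (Equiv.subRight j) _ _ (fun k => rfl)
    rw [h1]
    have h2 : ∑ k : ZMod N,
        (6 * ((k : ZMod N).val : ℝ) ^ 2 - 6 * N * ((k : ZMod N).val : ℝ) + N ^ 2 - 1) / (12 * N)
        = ∑ d ∈ Finset.range N,
            (6 * (d : ℝ) ^ 2 - 6 * (N : ℝ) * d + (N : ℝ) ^ 2 - 1) / (12 * N) := by
      apply Finset.sum_nbij' (fun k : ZMod N => k.val) (fun d : ℕ => (d : ZMod N))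
      · intro a _; exact Finset.mem_range.mpr (ZMod.val_lt a)
      · intro a _; exact Finset.mem_univ _
      · intro a _; exact hcast a
      · intro a ha; exact ZMod.val_cast_of_lt (Finset.mem_range.mp ha)
      · intro a _; rfl
    rw [h2]
    exact gsum N hN
  -- entries of A * B
  have hABentry : ∀ i j : ZMod N, (A * B) i j = (if i = j then 1 else 0) - 1 / N := by
    intro i j
    rw [mul_apply]
    have hsum : ∑ k : ZMod N, A i k * B k j
        = ∑ k : ZMod N, ((if k = i then 2 * B i j else 0)
            + (if k = i - 1 then -(B (i - 1) j) else 0)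
            + (if k = i + 1 then -(B (i + 1) j) else 0)) := by
      apply Finset.sum_congr rfl
      intro k _
      rw [hdecRow i k]
      by_cases h1 : k = i
      · subst h1; simp [dist1 k, dist2 k]
      · by_cases h2 : k = i - 1
        · subst h2
          simp [Ne.symm (dist1 i), dist3 i]
        · by_cases h3 : k = i + 1
          · subst h3
            simp [Ne.symm (dist2 i), Ne.symm (dist3 i)]
          · simp [h1, h2, h3]
    rw [hsum, Finset.sum_add_distrib, Finset.sum_add_distrib]
    simp only [Finset.sum_ite_eq', Finset.mem_univ, if_true]
    rw [hB i j, hB (i - 1) j, hB (i + 1) j]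
    have e1 : (i - 1 - j).val = ((i - j).val + (N - 1)) % N := by
      have h : i - 1 - j = (i - j) + (-1) := by ring
      rw [h, ZMod.val_add, hvalneg]
    have e2 : (i + 1 - j).val = ((i - j).val + 1) % N := by
      have h : i + 1 - j = (i - j) + 1 := by ring
      rw [h, ZMod.val_add, hval1]
    rw [e1, e2]
    have hk := key N hN ((i - j).val) (ZMod.val_lt _)
    have heq : (if i = j then (1:ℝ) else 0) = (if (i - j).val = 0 then 1 else 0) := by
      by_cases h : i = j
      · rw [if_pos h, if_pos (by rw [h, sub_self, ZMod.val_zero])]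
      · rw [if_neg h, if_neg (fun hv => h (sub_eq_zero.mp (ZMod.val_eq_zero _ |>.mp hv)))]
    rw [heq]
    linarith [hk]
  -- entries of B * A
  have hBAentry : ∀ i j : ZMod N, (B * A) i j = (if i = j then 1 else 0) - 1 / N := by
    intro i j
    rw [mul_apply]
    have hsum : ∑ k : ZMod N, B i k * A k j
        = ∑ k : ZMod N, ((if k = j then 2 * B i j else 0)
            + (if k = j + 1 then -(B i (j + 1)) else 0)
            + (if k = j - 1 then -(B i (j - 1)) else 0)) := by
      apply Finset.sum_congr rfl
      intro k _
      rw [hdecCol k j]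
      by_cases h1 : k = j
      · subst h1; simp [dist1 k, dist2 k, mul_comm]
      · by_cases h2 : k = j + 1
        · subst h2
          simp [Ne.symm (dist2 j), Ne.symm (dist3 j), mul_comm]
        · by_cases h3 : k = j - 1
          · subst h3
            simp [Ne.symm (dist1 j), dist3 j, mul_comm]
          · simp [h1, h2, h3]
    rw [hsum, Finset.sum_add_distrib, Finset.sum_add_distrib]
    simp only [Finset.sum_ite_eq', Finset.mem_univ, if_true]
    rw [hB i j, hB i (j + 1), hB i (j - 1)]
    have e1 : (i - (j + 1)).val = ((i - j).val + (N - 1)) % N := by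
      have h : i - (j + 1) = (i - j) + (-1) := by ring
      rw [h, ZMod.val_add, hvalneg]
    have e2 : (i - (j - 1)).val = ((i - j).val + 1) % N := by
      have h : i - (j - 1) = (i - j) + 1 := by ring
      rw [h, ZMod.val_add, hval1]
    rw [e1, e2]
    have hk := key N hN ((i - j).val) (ZMod.val_lt _)
    have heq : (if i = j then (1:ℝ) else 0) = (if (i - j).val = 0 then 1 else 0) := by
      by_cases h : i = j
      · rw [if_pos h, if_pos (by rw [h, sub_self, ZMod.val_zero])]
      · rw [if_neg h, if_neg (fun hv => h (sub_eq_zero.mp (ZMod.val_eq_zero _ |>.mp hv)))]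
    rw [heq]
    linarith [hk]
  refine ⟨?_, ?_, ?_, ?_⟩
  · ext i j
    rw [mul_apply]
    have : ∑ k : ZMod N, (A * B) i k * A k j
        = ∑ k : ZMod N, ((if i = k then A k j else 0) - 1 / N * A k j) := by
      apply Finset.sum_congr rfl
      intro k _
      rw [hABentry i k]
      by_cases h : i = k <;> simp [h] <;> ring
    rw [this, Finset.sum_sub_distrib, Finset.sum_ite_eq, ← Finset.mul_sum, colA j]
    simp
  · ext i j
    rw [mul_apply]
    have : ∑ k : ZMod N, (B * A) i k * B k j
        = ∑ k : ZMod N, ((if i = k then B k j else 0) - 1 / N * B k j) := by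
      apply Finset.sum_congr rfl
      intro k _
      rw [hBAentry i k]
      by_cases h : i = k <;> simp [h] <;> ring
    rw [this, Finset.sum_sub_distrib, Finset.sum_ite_eq, ← Finset.mul_sum, colB j]
    simp
  · ext i j
    rw [transpose_apply, hABentry, hABentry]
    rcases eq_or_ne i j with h | h
    · rw [h]
    · rw [if_neg h, if_neg (Ne.symm h)]
  · ext i j
    rw [transpose_apply, hBAentry, hBAentry]
    rcases eq_or_ne i j with h | h
    · rw [h]
    · rw [if_neg h, if_neg (Ne.symm h)]
end

section
/- Let L ≥ 2, N = 2^L, and let B ∈ ℝ^{N×N} be the circulant with entries B_{i,j} = f((i−j) mod N), where f(d) = (6d² − 6Nd + N² − 1)/(12N) (this B is the Moore–Penrose pseudoinverse A_S^+ of the stiffness circulant A_S = circ(2, −1, 0, …, 0, −1)). Then for every k ∈ {1, …, L−1}, the k-th reshaped matrix B̂_k satisfies rank(B̂_k) ≤ 4; that is, the QTT ranks of A_S^+ do not exceed 4. -/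
set_option maxHeartbeats 1000000

lemma valsub (N m n : ℕ) (hm : m < N) (hn : n < N) :
    ((((m : ZMod N) - n).val : ℕ) : ℝ) = if n ≤ m then (m : ℝ) - n else (m : ℝ) + N - n := by
  haveI : NeZero N := ⟨by omega⟩
  have h1 : (m : ZMod N) - n = ((m + (N - n) : ℕ) : ZMod N) := by
    push_cast [Nat.cast_sub hn.le]
    rw [ZMod.natCast_self]
    ring
  rw [h1, ZMod.val_natCast]
  by_cases h : n ≤ m
  · have h2 : m + (N - n) = (m - n) + N := by omega
    rw [h2, Nat.add_mod_right, Nat.mod_eq_of_lt (by omega), if_pos h]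
    push_cast [Nat.cast_sub h]
    ring
  · rw [Nat.mod_eq_of_lt (by omega), if_neg h]
    push_cast [Nat.cast_sub hn.le]
    ring

/-- QTT rank bound for the pseudoinverse of the stiffness matrix: for `N = 2^L`, the
circulant `B ∈ ℝ^{N×N}` with entries `B_{i,j} = f((i-j) mod N)`,
`f(d) = (6d² - 6Nd + N² - 1)/(12N)` (the pseudoinverse `A_S⁺`), has all its reshaped
matrices of rank at most `4`; i.e. the QTT ranks of `A_S⁺` do not exceed `4`. -/
theorem stmt15 (L : ℕ) (hL : 2 ≤ L)
    (B : Matrix (ZMod (2 ^ L)) (ZMod (2 ^ L)) ℝ)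
    (hB : ∀ i j : ZMod (2 ^ L), B i j =
      (6 * ((i - j).val : ℝ) ^ 2 - 6 * (2 ^ L : ℝ) * ((i - j).val : ℝ)
        + (2 ^ L : ℝ) ^ 2 - 1) / (12 * (2 ^ L : ℝ))) :
    ∀ k : ℕ, 1 ≤ k → k ≤ L - 1 →
      ∀ Bhat : Matrix (Fin (2 ^ k) × Fin (2 ^ k)) (Fin (2 ^ (L - k)) × Fin (2 ^ (L - k))) ℝ,
        (∀ (i₁ j₁ : Fin (2 ^ k)) (i₂ j₂ : Fin (2 ^ (L - k))),
          Bhat (i₁, j₁) (i₂, j₂)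
            = B ((((i₁ : ℕ) * 2 ^ (L - k) + (i₂ : ℕ) : ℕ) : ZMod (2 ^ L)))
                ((((j₁ : ℕ) * 2 ^ (L - k) + (j₂ : ℕ) : ℕ) : ZMod (2 ^ L)))) →
        Matrix.rank Bhat ≤ 4 := by
  intro k hk hkL Bhat hBhat
  have hkL' : k ≤ L := le_trans hkL (Nat.sub_le L 1)
  have hPQ : 2 ^ k * 2 ^ (L - k) = 2 ^ L := by
    rw [← pow_add, Nat.add_sub_cancel' hkL']
  -- real abbreviations
  set Q : ℝ := (2 : ℝ) ^ (L - k) with hQ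
  set Nr : ℝ := (2 : ℝ) ^ L with hNr
  have hNrpos : 0 < Nr := by positivity
  -- factorization
  set G : Matrix (Fin (2 ^ k) × Fin (2 ^ k)) (Fin 4) ℝ := fun p t =>
    ![(6 * (((p.1 : ℕ) : ℝ) - ((p.2 : ℕ) : ℝ)) ^ 2 * Q ^ 2 + Nr ^ 2 - 1) / (12 * Nr)
        - |((p.1 : ℕ) : ℝ) - ((p.2 : ℕ) : ℝ)| * Q / 2,
      (12 * (((p.1 : ℕ) : ℝ) - ((p.2 : ℕ) : ℝ)) * Q) / (12 * Nr)
        - (if (p.1 : ℕ) = (p.2 : ℕ) then (0 : ℝ)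
            else if (p.2 : ℕ) < (p.1 : ℕ) then 1 else -1) / 2,
      6 / (12 * Nr),
      if (p.1 : ℕ) = (p.2 : ℕ) then (-1 / 2 : ℝ) else 0] t with hG
  set H : Matrix (Fin 4) (Fin (2 ^ (L - k)) × Fin (2 ^ (L - k))) ℝ := fun t q =>
    ![(1 : ℝ), ((q.1 : ℕ) : ℝ) - ((q.2 : ℕ) : ℝ),
      (((q.1 : ℕ) : ℝ) - ((q.2 : ℕ) : ℝ)) ^ 2,
      |((q.1 : ℕ) : ℝ) - ((q.2 : ℕ) : ℝ)|] t with hH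
  have hfac : Bhat = G * H := by
    ext ⟨a, b⟩ ⟨c, e⟩
    rw [hBhat, hB, Matrix.mul_apply, Fin.sum_univ_four]
    have ha := a.isLt
    have hb := b.isLt
    have hc := c.isLt
    have he := e.isLt
    have hm : (a : ℕ) * 2 ^ (L - k) + (c : ℕ) < 2 ^ L := by
      calc (a : ℕ) * 2 ^ (L - k) + (c : ℕ)
          < (a : ℕ) * 2 ^ (L - k) + 2 ^ (L - k) := by omega
        _ = ((a : ℕ) + 1) * 2 ^ (L - k) := by ring
        _ ≤ 2 ^ k * 2 ^ (L - k) := Nat.mul_le_mul_right _ (by omega)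
        _ = 2 ^ L := hPQ
    have hn : (b : ℕ) * 2 ^ (L - k) + (e : ℕ) < 2 ^ L := by
      calc (b : ℕ) * 2 ^ (L - k) + (e : ℕ)
          < (b : ℕ) * 2 ^ (L - k) + 2 ^ (L - k) := by omega
        _ = ((b : ℕ) + 1) * 2 ^ (L - k) := by ring
        _ ≤ 2 ^ k * 2 ^ (L - k) := Nat.mul_le_mul_right _ (by omega)
        _ = 2 ^ L := hPQ
    rw [valsub _ _ _ hm hn]
    simp only [hG, hH]
    have hNR : Nr = (2 : ℝ) ^ k * Q := by
      rw [hQ, hNr, ← pow_add, Nat.add_sub_cancel' hkL']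
    have hQpos : (0 : ℝ) < Q := by positivity
    have h2L : ((2 ^ L : ℕ) : ℝ) = Nr := by push_cast [hNr]; ring
    have h2Q : ((2 ^ (L - k) : ℕ) : ℝ) = Q := by push_cast [hQ]; ring
    rcases lt_trichotomy (a : ℕ) (b : ℕ) with hab | hab | hab
    · -- a < b : m < n
      have hmn : ¬ ((b : ℕ) * 2 ^ (L - k) + (e : ℕ) ≤ (a : ℕ) * 2 ^ (L - k) + (c : ℕ)) := by
        have : ((a : ℕ) + 1) * 2 ^ (L - k) ≤ (b : ℕ) * 2 ^ (L - k) :=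
          Nat.mul_le_mul_right _ (by omega)
        nlinarith [this]
      rw [if_neg hmn, if_neg (by omega : ¬ (a : ℕ) = (b : ℕ)),
        if_neg (by omega : ¬ (b : ℕ) < (a : ℕ)),
        if_neg (by omega : ¬ (a : ℕ) = (b : ℕ))]
      have habs : |((a : ℕ) : ℝ) - ((b : ℕ) : ℝ)| = ((b : ℕ) : ℝ) - ((a : ℕ) : ℝ) := by
        rw [abs_sub_comm]
        exact abs_of_nonneg (sub_nonneg.mpr (by exact_mod_cast hab.le))
      rcases le_or_gt (e : ℕ) (c : ℕ) with hce | hce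
      · have habs2 : |((c : ℕ) : ℝ) - ((e : ℕ) : ℝ)| = ((c : ℕ) : ℝ) - ((e : ℕ) : ℝ) := by
          exact abs_of_nonneg (sub_nonneg.mpr (by exact_mod_cast hce))
        rw [habs, habs2]
        push_cast [h2L, h2Q, hNR]
        field_simp
        ring
      · have habs2 : |((c : ℕ) : ℝ) - ((e : ℕ) : ℝ)| = ((e : ℕ) : ℝ) - ((c : ℕ) : ℝ) := by
          rw [abs_sub_comm]
          exact abs_of_nonneg (sub_nonneg.mpr (by exact_mod_cast hce.le))
        rw [habs, habs2]
        push_cast [h2L, h2Q, hNR]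
        field_simp
        ring
    · -- a = b
      have hmn : ((b : ℕ) * 2 ^ (L - k) + (e : ℕ) ≤ (a : ℕ) * 2 ^ (L - k) + (c : ℕ))
          ↔ (e : ℕ) ≤ (c : ℕ) := by rw [hab]; omega
      have habs : |((a : ℕ) : ℝ) - ((b : ℕ) : ℝ)| = 0 := by
        rw [hab]; simp
      rw [if_pos hab, if_pos hab, habs]
      rcases le_or_gt (e : ℕ) (c : ℕ) with hce | hce
      · rw [if_pos (hmn.mpr hce)]
        have habs2 : |((c : ℕ) : ℝ) - ((e : ℕ) : ℝ)| = ((c : ℕ) : ℝ) - ((e : ℕ) : ℝ) := by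
          exact abs_of_nonneg (sub_nonneg.mpr (by exact_mod_cast hce))
        rw [habs2, hab]
        push_cast [h2L, h2Q, hNR]
        field_simp
        ring
      · rw [if_neg (fun h => absurd (hmn.mp h) (by omega))]
        have habs2 : |((c : ℕ) : ℝ) - ((e : ℕ) : ℝ)| = ((e : ℕ) : ℝ) - ((c : ℕ) : ℝ) := by
          rw [abs_sub_comm]
          exact abs_of_nonneg (sub_nonneg.mpr (by exact_mod_cast hce.le))
        rw [habs2, hab]
        push_cast [h2L, h2Q, hNR]
        field_simp
        ring
    · -- b < a : n ≤ m
      have hmn : ((b : ℕ) * 2 ^ (L - k) + (e : ℕ) ≤ (a : ℕ) * 2 ^ (L - k) + (c : ℕ)) := by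
        have : ((b : ℕ) + 1) * 2 ^ (L - k) ≤ (a : ℕ) * 2 ^ (L - k) :=
          Nat.mul_le_mul_right _ (by omega)
        nlinarith [this]
      rw [if_pos hmn, if_neg (by omega : ¬ (a : ℕ) = (b : ℕ)), if_pos hab,
        if_neg (by omega : ¬ (a : ℕ) = (b : ℕ))]
      have habs : |((a : ℕ) : ℝ) - ((b : ℕ) : ℝ)| = ((a : ℕ) : ℝ) - ((b : ℕ) : ℝ) := by
        exact abs_of_nonneg (sub_nonneg.mpr (by exact_mod_cast hab.le))
      rcases le_or_gt (e : ℕ) (c : ℕ) with hce | hce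
      · have habs2 : |((c : ℕ) : ℝ) - ((e : ℕ) : ℝ)| = ((c : ℕ) : ℝ) - ((e : ℕ) : ℝ) := by
          exact abs_of_nonneg (sub_nonneg.mpr (by exact_mod_cast hce))
        rw [habs, habs2]
        push_cast [h2L, h2Q, hNR]
        field_simp
        ring
      · have habs2 : |((c : ℕ) : ℝ) - ((e : ℕ) : ℝ)| = ((e : ℕ) : ℝ) - ((c : ℕ) : ℝ) := by
          rw [abs_sub_comm]
          exact abs_of_nonneg (sub_nonneg.mpr (by exact_mod_cast hce.le))
        rw [habs, habs2]
        push_cast [h2L, h2Q, hNR]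
        field_simp
        ring
  calc Matrix.rank Bhat = Matrix.rank (G * H) := by rw [hfac]
    _ ≤ Matrix.rank G := Matrix.rank_mul_le_left G H
    _ ≤ Fintype.card (Fin 4) := Matrix.rank_le_card_width G
    _ = 4 := by simp
end

section
/- Let L > 2, let r ≥ 1, let α_1, …, α_r ∈ ℂ and w_1, …, w_r ∈ ℂ, and let B_L ∈ ℂ^{2^L×2^L} be the circulant whose first column has entries (B_L)_{j,0} = ∑_{t=1}^{r} α_t w_t^j for j = 0, …, 2^L − 1 (so (B_L)_{i,j} = ∑_t α_t w_t^{(i−j) mod 2^L}). Then B_L admits a QTT representation with ranks (2, r+1, r+1, …, r+1); in particular, the first reshaped matrix satisfies rank((B_L)̂_1) ≤ 2 and, for every k ∈ {2, …, L−1}, the k-th reshaped matrix satisfies rank((B_L)̂_k) ≤ r + 1. -/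
/-!
Write `N₁ = 2 ^ k`, `N₂ = 2 ^ (L - k)`, `i = i₁ N₂ + i₂` and `j = j₁ N₂ + j₂`. Modulo `N₁ N₂` we
have `i - j ≡ c N₂ + i₂ - j₂` with `c = (i₁ - j₁) mod N₁`, so row `(i₁, j₁)` of the reshaped matrix
depends only on `c`: there are at most `N₁` distinct rows, which gives rank `≤ 2` for `k = 1`.
For `c ≠ 0` there is no wrap-around, the exponent is `(c - 1) N₂ + (N₂ + i₂ - j₂)`, and the row is
`∑ₜ (wₜ ^ N₂) ^ (c - 1) • (αₜ wₜ ^ (N₂ + i₂ - j₂))`, a combination of `r` fixed vectors. Together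
with the row `c = 0` they span all rows, so the rank is at most `r + 1`.
-/

open Submodule

theorem Matrix.rank_le_card_of_row_mem_span {m n ι K : Type*} [Field K] [Finite m] [Fintype n]
    [Fintype ι] (A : Matrix m n K) (v : ι → n → K) (hA : ∀ i, A i ∈ span K (Set.range v)) :
    A.rank ≤ Fintype.card ι := by
  rw [A.rank_eq_finrank_span_row]
  exact (finrank_mono (span_le.2 (Set.range_subset_iff.2 hA))).trans (finrank_range_le_card v)

theorem ZMod.val_natCast_sub_natCast {n a b : ℕ} (hba : b ≤ a) (ha : a < n) :
    ((a : ZMod n) - b).val = a - b := by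
  rw [← Nat.cast_sub hba, ZMod.val_natCast_of_lt (by omega)]

theorem ZMod.natCast_mul_add_sub_natCast_mul_add {N₁ N₂ : ℕ} (a b : Fin N₁) (x y : ℕ) :
    ((((a : ℕ) * N₂ + x : ℕ) : ZMod (N₁ * N₂)) - (((b : ℕ) * N₂ + y : ℕ) : ZMod (N₁ * N₂)))
      = ((((a - b : Fin N₁) : ℕ) * N₂ + x : ℕ) : ZMod (N₁ * N₂)) - (y : ℕ) := by
  have hN : ((N₁ * N₂ : ℕ) : ZMod (N₁ * N₂)) = 0 := ZMod.natCast_self _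
  rcases le_or_gt b a with hba | hab
  · rw [Fin.coe_sub_iff_le.2 hba]
    push_cast [Nat.cast_sub (Fin.le_iff_val_le_val.1 hba)]
    ring
  · rw [Fin.coe_sub_iff_lt.2 hab]
    push_cast [Nat.cast_sub (by omega : (b : ℕ) ≤ N₁ + a)] at hN ⊢
    linear_combination -hN

theorem ZMod.val_natCast_mul_add_sub_natCast {N₁ N₂ c x y : ℕ} (hc₀ : 0 < c) (hc : c < N₁)
    (hx : x < N₂) (hy : y < N₂) :
    (((c * N₂ + x : ℕ) : ZMod (N₁ * N₂)) - (y : ℕ)).val = (c - 1) * N₂ + (N₂ + x - y) := by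
  obtain ⟨c, rfl⟩ : ∃ c', c = c' + 1 := ⟨c - 1, by omega⟩
  have hlt : (c + 1) * N₂ + x < N₁ * N₂ :=
    calc (c + 1) * N₂ + x < (c + 2) * N₂ := by linarith
      _ ≤ N₁ * N₂ := Nat.mul_le_mul_right _ hc
  rw [ZMod.val_natCast_sub_natCast (by nlinarith) hlt, Nat.add_sub_cancel, add_mul, one_mul]
  omega

section ReshapedCirculant

variable {K : Type*} {N₁ N₂ N : ℕ}

def reshapedCirculant (N₁ N₂ : ℕ) (f : ZMod N → K) :
    Matrix (Fin N₁ × Fin N₁) (Fin N₂ × Fin N₂) K :=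
  Matrix.of fun p q => f (((p.1 * N₂ + q.1 : ℕ) : ZMod N) - ((p.2 * N₂ + q.2 : ℕ) : ZMod N))

def foldedCirculantRow (N₂ : ℕ) (f : ZMod N → K) (c : ℕ) : Fin N₂ × Fin N₂ → K :=
  fun q => f (((c * N₂ + q.1 : ℕ) : ZMod N) - (q.2 : ℕ))

theorem reshapedCirculant_apply (hN : N₁ * N₂ = N) (f : ZMod N → K) (i₁ j₁ : Fin N₁) :
    reshapedCirculant N₁ N₂ f (i₁, j₁) = foldedCirculantRow N₂ f (i₁ - j₁ : Fin N₁) := by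
  subst hN
  ext q
  exact congrArg f (ZMod.natCast_mul_add_sub_natCast_mul_add i₁ j₁ q.1 q.2)

theorem foldedCirculantRow_expSum [CommSemiring K] (α w : ℕ → K) (r : ℕ) {c : ℕ}
    (hc₀ : 0 < c) (hc : c < N₁) :
    foldedCirculantRow N₂ (fun x : ZMod (N₁ * N₂) => ∑ t ∈ Finset.range r, α t * w t ^ x.val) c
      = ∑ t ∈ Finset.range r,
          (w t ^ N₂) ^ (c - 1) • fun q : Fin N₂ × Fin N₂ => α t * w t ^ (N₂ + q.1 - q.2) := by
  ext q
  simp only [foldedCirculantRow, Finset.sum_apply, Pi.smul_apply, smul_eq_mul,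
    ZMod.val_natCast_mul_add_sub_natCast hc₀ hc q.1.isLt q.2.isLt, pow_add, pow_mul]
  exact Finset.sum_congr rfl fun t _ => by ring

variable [Field K]

theorem rank_reshapedCirculant_le (hN : N₁ * N₂ = N) (f : ZMod N → K) :
    (reshapedCirculant N₁ N₂ f).rank ≤ N₁ := by
  simpa using Matrix.rank_le_card_of_row_mem_span _
    (fun c : Fin N₁ => foldedCirculantRow N₂ f c)
    fun p => subset_span ⟨p.1 - p.2, (reshapedCirculant_apply hN f p.1 p.2).symm⟩

theorem rank_reshapedCirculant_expSum_le (hN : N₁ * N₂ = N) (α w : ℕ → K) (r : ℕ) :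
    (reshapedCirculant N₁ N₂ fun x : ZMod N => ∑ t ∈ Finset.range r, α t * w t ^ x.val).rank
      ≤ r + 1 := by
  subst hN
  set f : ZMod (N₁ * N₂) → K := fun x => ∑ t ∈ Finset.range r, α t * w t ^ x.val
  let v : Option (Fin r) → Fin N₂ × Fin N₂ → K
    | none => foldedCirculantRow N₂ f 0
    | some t => fun q => α t * w t ^ (N₂ + q.1 - q.2)
  simpa using Matrix.rank_le_card_of_row_mem_span _ v fun p => by
    rw [reshapedCirculant_apply rfl]
    rcases Nat.eq_zero_or_pos (p.1 - p.2 : Fin N₁) with hc | hc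
    · exact subset_span ⟨none, by rw [hc]⟩
    rw [foldedCirculantRow_expSum α w r hc (Fin.isLt _), Finset.sum_range]
    exact sum_mem fun t _ => smul_mem _ _ (subset_span ⟨some t, rfl⟩)

end ReshapedCirculant

theorem stmt18_general (L : ℕ) (r : ℕ)
    (α w : ℕ → ℂ)
    (B : Matrix (ZMod (2 ^ L)) (ZMod (2 ^ L)) ℂ)
    (hB : ∀ i j : ZMod (2 ^ L), B i j =
      ∑ t ∈ Finset.range r, α t * w t ^ ((i - j).val)) :
    ∀ k : ℕ, 1 ≤ k → k ≤ L - 1 →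
      ∀ Bhat : Matrix (Fin (2 ^ k) × Fin (2 ^ k)) (Fin (2 ^ (L - k)) × Fin (2 ^ (L - k))) ℂ,
        (∀ (i₁ j₁ : Fin (2 ^ k)) (i₂ j₂ : Fin (2 ^ (L - k))),
          Bhat (i₁, j₁) (i₂, j₂)
            = B ((((i₁ : ℕ) * 2 ^ (L - k) + (i₂ : ℕ) : ℕ) : ZMod (2 ^ L)))
                ((((j₁ : ℕ) * 2 ^ (L - k) + (j₂ : ℕ) : ℕ) : ZMod (2 ^ L)))) →
        Matrix.rank Bhat ≤ if k = 1 then 2 else r + 1 := by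
  intro k hk₁ hk₂ Bhat hBhat
  have hN : 2 ^ k * 2 ^ (L - k) = 2 ^ L := by rw [← pow_add, Nat.add_sub_cancel' (by omega)]
  obtain rfl : Bhat = reshapedCirculant (2 ^ k) (2 ^ (L - k))
      fun x : ZMod (2 ^ L) => ∑ t ∈ Finset.range r, α t * w t ^ x.val := by
    ext ⟨i₁, j₁⟩ ⟨i₂, j₂⟩
    rw [hBhat, hB]
    rfl
  split_ifs with hk
  · subst hk
    exact rank_reshapedCirculant_le hN _
  · exact rank_reshapedCirculant_expSum_le hN α w r

/-- QTT ranks of the circulant `B_L ∈ ℂ^{2^L × 2^L}` whose first column is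
`(B_L)_j = ∑_{t=1}^r α_t w_t^j`: the first reshaped matrix has rank at most `2` and the
`k`-th reshaped matrix (for `2 ≤ k ≤ L-1`) has rank at most `r + 1`, i.e. `B_L` admits a
QTT representation with ranks `(2, r+1, …, r+1)`. -/
theorem stmt18 (L : ℕ) (hL : 2 < L) (r : ℕ) (hr : 1 ≤ r)
    (α w : ℕ → ℂ)
    (B : Matrix (ZMod (2 ^ L)) (ZMod (2 ^ L)) ℂ)
    (hB : ∀ i j : ZMod (2 ^ L), B i j =
      ∑ t ∈ Finset.range r, α t * w t ^ ((i - j).val)) :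
    ∀ k : ℕ, 1 ≤ k → k ≤ L - 1 →
      ∀ Bhat : Matrix (Fin (2 ^ k) × Fin (2 ^ k)) (Fin (2 ^ (L - k)) × Fin (2 ^ (L - k))) ℂ,
        (∀ (i₁ j₁ : Fin (2 ^ k)) (i₂ j₂ : Fin (2 ^ (L - k))),
          Bhat (i₁, j₁) (i₂, j₂)
            = B ((((i₁ : ℕ) * 2 ^ (L - k) + (i₂ : ℕ) : ℕ) : ZMod (2 ^ L)))
                ((((j₁ : ℕ) * 2 ^ (L - k) + (j₂ : ℕ) : ℕ) : ZMod (2 ^ L)))) →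
        Matrix.rank Bhat ≤ if k = 1 then 2 else r + 1 :=
  stmt18_general L r α w B hB
end
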